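/- arXiv:1303.2485 — 11 statements merged into one kernel-verified Lean document; each statement's English description precedes it below -/
import Mathlib

section
/- Let Γ be a finite quiver containing no oriented cycles and let (H,f) be a non-zero Hilbert representation of Γ. Then (H,f) is simple if and only if (H,f) is canonically simple, i.e., there exists a vertex v₀ with H_{v₀} = ℂ, H_v = 0 for every vertex v ≠ v₀, and f_α = 0 for every arrow α. -/
/-!
On a finite acyclic quiver, reachability is a well-founded strict order, so among the
vertices carrying a non-zero space there is a sink `v₀` of this support: every arrow leaving `v₀`
lands in a zero space. The line spanned by a non-zero `x ∈ H v₀`, placed at `v₀` and `0`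
elsewhere, is then a closed subrepresentation; simplicity forces it to be everything, and
every arrow vanishes because its source or its target is zero.
-/

open Relation

theorem Finite.exists_mem_forall_mem_not_rel {V : Type*} [Finite V] {R : V → V → Prop}
    (hacyclic : ∀ v, ¬ TransGen R v v) {S : Set V} (hS : S.Nonempty) :
    ∃ v ∈ S, ∀ w ∈ S, ¬ R v w := by
  have : IsTrans V (flip (TransGen R)) := ⟨fun _ _ _ hab hbc => hbc.trans hab⟩
  have : Std.Irrefl (flip (TransGen R)) := ⟨hacyclic⟩
  obtain ⟨v, hv, hmin⟩ := (Finite.wellFounded_of_trans_of_irrefl (flip (TransGen R))).has_min S hS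
  exact ⟨v, hv, fun w hw hvw => hmin w hw (TransGen.single hvw)⟩

namespace QuiverRep

variable {𝕜 : Type*} [NontriviallyNormedField 𝕜] {V E : Type*} {s r : E → V}
  {H : V → Type*} [∀ v, NormedAddCommGroup (H v)] [∀ v, NormedSpace 𝕜 (H v)]

def IsSimple (f : ∀ α : E, H (s α) →L[𝕜] H (r α)) : Prop :=
  ∀ K : ∀ v : V, Submodule 𝕜 (H v),
    (∀ v, IsClosed (K v : Set (H v))) →
    (∀ α : E, ∀ x ∈ K (s α), f α x ∈ K (r α)) →
    (∀ v, K v = ⊥) ∨ (∀ v, K v = ⊤)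

def IsCanonicallySimple (f : ∀ α : E, H (s α) →L[𝕜] H (r α)) : Prop :=
  ∃ v₀ : V,
    (∃ x : H v₀, x ≠ 0 ∧ ∀ y : H v₀, ∃ c : 𝕜, y = c • x) ∧
    (∀ v : V, v ≠ v₀ → ∀ x : H v, x = 0) ∧
    (∀ α : E, f α = 0)

theorem IsCanonicallySimple.isSimple {f : ∀ α : E, H (s α) →L[𝕜] H (r α)}
    (hf : IsCanonicallySimple f) : IsSimple f := by
  obtain ⟨v₀, ⟨x, -, hspan⟩, hzero, -⟩ := hf
  intro K _ _
  have hK_of_ne : ∀ v ≠ v₀, ∀ L : Submodule 𝕜 (H v), L = ⊥ ∧ L = ⊤ := fun v hv L =>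
    ⟨L.eq_bot_iff.mpr fun y _ => hzero v hv y,
      L.eq_top_iff'.mpr fun y => hzero v hv y ▸ L.zero_mem⟩
  by_cases hK : K v₀ = ⊥
  · refine .inl fun v => ?_
    rcases eq_or_ne v v₀ with rfl | hv
    exacts [hK, (hK_of_ne v hv _).1]
  · refine .inr fun v => ?_
    rcases eq_or_ne v v₀ with rfl | hv
    · obtain ⟨y, hyK, hy⟩ := Submodule.exists_mem_ne_zero_of_ne_bot hK
      obtain ⟨c, rfl⟩ := hspan y
      have hxK : x ∈ K v := by
        simpa [smul_smul, inv_mul_cancel₀ (left_ne_zero_of_smul hy)] using (K v).smul_mem c⁻¹ hyK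
      refine (K v).eq_top_iff'.mpr fun z => ?_
      obtain ⟨d, rfl⟩ := hspan z
      exact (K v).smul_mem d hxK
    · exact (hK_of_ne v hv _).2

variable [CompleteSpace 𝕜]

theorem IsSimple.isCanonicallySimple_of_sink {f : ∀ α : E, H (s α) →L[𝕜] H (r α)}
    (hf : IsSimple f) {v₀ : V} {x : H v₀} (hx : x ≠ 0)
    (hsink : ∀ α : E, s α = v₀ → ∀ y : H (r α), y = 0) : IsCanonicallySimple f := by
  classical
  set K : ∀ v : V, Submodule 𝕜 (H v) := fun v => 𝕜 ∙ Pi.single v₀ x v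
  have hK_of_ne : ∀ v ≠ v₀, K v = ⊥ := fun v hv => by simp [K, Pi.single_eq_of_ne hv]
  have hinv : ∀ α : E, ∀ y ∈ K (s α), f α y ∈ K (r α) := by
    intro α y hy
    by_cases hα : s α = v₀
    · rw [hsink α hα (f α y)]
      exact zero_mem _
    · rw [hK_of_ne _ hα, Submodule.mem_bot] at hy
      simp [hy]
  rcases hf K (fun v => Submodule.closed_of_finiteDimensional _) hinv with hbot | htop
  · exact absurd (by simpa [K] using hbot v₀) hx
  have hmem : ∀ v, ∀ y : H v, y ∈ K v := fun v y => htop v ▸ Submodule.mem_top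
  have hzero : ∀ v ≠ v₀, ∀ y : H v, y = 0 := fun v hv y => by
    simpa [hK_of_ne v hv] using hmem v y
  refine ⟨v₀, ⟨x, hx, fun y => ?_⟩, hzero, fun α => ?_⟩
  · obtain ⟨c, hc⟩ := Submodule.mem_span_singleton.mp (hmem v₀ y)
    exact ⟨c, by simpa using hc.symm⟩
  · ext y
    by_cases hα : s α = v₀
    · exact hsink α hα _
    · simp [hzero _ hα y]

theorem IsSimple.isCanonicallySimple [Finite V] {f : ∀ α : E, H (s α) →L[𝕜] H (r α)}
    (hf : IsSimple f)
    (hacyclic : ∀ v : V, ¬ TransGen (fun v w : V => ∃ α : E, s α = v ∧ r α = w) v v)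
    (hnz : ∃ v : V, ∃ x : H v, x ≠ 0) : IsCanonicallySimple f := by
  obtain ⟨v₀, ⟨x, hx⟩, hsink⟩ :=
    Finite.exists_mem_forall_mem_not_rel hacyclic (S := {v | ∃ x : H v, x ≠ 0}) hnz
  refine hf.isCanonicallySimple_of_sink hx fun α hα y => ?_
  by_contra hy
  exact hsink (r α) ⟨y, hy⟩ ⟨α, hα, rfl⟩

end QuiverRep

theorem stmt_1_general
    {V E : Type*} [Fintype V] (s r : E → V)
    (H : V → Type*) [∀ v, NormedAddCommGroup (H v)]
    [∀ v, InnerProductSpace ℂ (H v)]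
    (f : ∀ α : E, H (s α) →L[ℂ] H (r α))
    -- `Γ` contains no oriented cycles
    (hacyclic : ∀ v : V,
      ¬ Relation.TransGen (fun v w : V => ∃ α : E, s α = v ∧ r α = w) v v)
    -- `(H,f)` is non-zero
    (hnz : ∃ v : V, ∃ x : H v, x ≠ 0) :
    -- `(H,f)` is simple
    ((∀ K : ∀ v : V, Submodule ℂ (H v),
        (∀ v, IsClosed (K v : Set (H v))) →
        (∀ α : E, ∀ x ∈ K (s α), f α x ∈ K (r α)) →
        (∀ v, K v = ⊥) ∨ (∀ v, K v = ⊤))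
      ↔
    -- iff `(H,f)` is canonically simple
      (∃ v₀ : V,
        (∃ x : H v₀, x ≠ 0 ∧ ∀ y : H v₀, ∃ c : ℂ, y = c • x) ∧
        (∀ v : V, v ≠ v₀ → ∀ x : H v, x = 0) ∧
        (∀ α : E, f α = 0))) :=
  ⟨fun hf => QuiverRep.IsSimple.isCanonicallySimple hf hacyclic hnz,
    QuiverRep.IsCanonicallySimple.isSimple⟩

/-- **For a finite quiver with no oriented cycles, a non-zero Hilbert representation is
simple iff it is canonically simple.**
The quiver is given by finite types `V`, `E` and maps `s r : E → V`; having no oriented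
cycles is expressed by the irreflexivity of the transitive closure of the arrow relation.
Simplicity: the only subrepresentations (families of closed invariant subspaces) are `0`
and the whole representation.  Canonical simplicity: there is a vertex `v₀` such that
`H v₀` is one-dimensional (i.e. `H v₀ = ℂ`), `H v = 0` for every other vertex `v`, and
`f α = 0` for every arrow `α`. -/
theorem stmt_1
    {V E : Type*} [Fintype V] [Fintype E] (s r : E → V)
    (H : V → Type*) [∀ v, NormedAddCommGroup (H v)]
    [∀ v, InnerProductSpace ℂ (H v)] [∀ v, CompleteSpace (H v)]
    (f : ∀ α : E, H (s α) →L[ℂ] H (r α))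
    -- `Γ` contains no oriented cycles
    (hacyclic : ∀ v : V,
      ¬ Relation.TransGen (fun v w : V => ∃ α : E, s α = v ∧ r α = w) v v)
    -- `(H,f)` is non-zero
    (hnz : ∃ v : V, ∃ x : H v, x ≠ 0) :
    -- `(H,f)` is simple
    ((∀ K : ∀ v : V, Submodule ℂ (H v),
        (∀ v, IsClosed (K v : Set (H v))) →
        (∀ α : E, ∀ x ∈ K (s α), f α x ∈ K (r α)) →
        (∀ v, K v = ⊥) ∨ (∀ v, K v = ⊤))
      ↔
    -- iff `(H,f)` is canonically simple
      (∃ v₀ : V,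
        (∃ x : H v₀, x ≠ 0 ∧ ∀ y : H v₀, ∃ c : ℂ, y = c • x) ∧
        (∀ v : V, v ≠ v₀ → ∀ x : H v, x = 0) ∧
        (∀ α : E, f α = 0))) :=
  stmt_1_general s r H f hacyclic hnz
end

section
/- Let A be a bounded operator on a complex Hilbert space 𝓗 and consider the Hilbert representation of the Kronecker quiver given by H₁ = H₂ = 𝓗, f_α = A, f_β = I (or symmetrically f_α = I, f_β = A). If A is strongly irreducible then this representation is indecomposable: the only pairs (T₁,T₂) of idempotent bounded operators on 𝓗 with T₂ A = A T₁ and T₂ = T₁ are (0,0) and (I,I). Moreover, if A is strongly irreducible and dim 𝓗 ≥ 2, the representation is not transitive, since (A,A) is an endomorphism that is not a scalar multiple of the identity. Conversely, if the representation is indecomposable then A is strongly irreducible. -/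
/-!
Idempotent operators commuting with `A` correspond to pairs of closed complementary
`A`-invariant subspaces: an idempotent gives its range and kernel, and conversely, in a Banach
space, a closed algebraic complement is a topological one (open mapping theorem), so the
projection along it is bounded. Scalar operators are never strongly irreducible in dimension
at least two, since every subspace is invariant: a line and its orthogonal complement split `𝓗`.
-/

/-- A bounded operator `A` on a complex Hilbert space is *strongly irreducible* if there
is no pair of non-zero closed `A`-invariant subspaces `M`, `N` with `M ∩ N = 0` and
`M + N = H`. -/
def StronglyIrreducible {H : Type*} [NormedAddCommGroup H] [InnerProductSpace ℂ H]
    (A : H →L[ℂ] H) : Prop :=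
  ¬ ∃ M N : Submodule ℂ H,
      IsClosed (M : Set H) ∧ IsClosed (N : Set H) ∧
      (∀ x ∈ M, A x ∈ M) ∧ (∀ x ∈ N, A x ∈ N) ∧
      M ⊓ N = ⊥ ∧ M ⊔ N = ⊤ ∧ M ≠ ⊥ ∧ N ≠ ⊥

section

open Submodule

theorem span_singleton_ne_top_of_two_le_rank {K V : Type*} [DivisionRing K] [AddCommGroup V]
    [Module K V] (hV : 2 ≤ Module.rank K V) (x : V) : (K ∙ x) ≠ ⊤ := by
  intro h
  have hle := rank_span_le (R := K) ({x} : Set V)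
  rw [h, rank_top, Cardinal.mk_singleton] at hle
  exact absurd (hle.trans_lt (by norm_num)) (not_lt.mpr hV)

variable {H : Type*} [NormedAddCommGroup H] [InnerProductSpace ℂ H]

theorem StronglyIrreducible.eq_zero_or_eq_one {A P : H →L[ℂ] H} (hA : StronglyIrreducible A)
    (hP : IsIdempotentElem P) (hPA : Commute P A) : P = 0 ∨ P = 1 := by
  have hc := ContinuousLinearMap.IsIdempotentElem.isTopCompl hP
  obtain ⟨hrange, hker⟩ := ContinuousLinearMap.IsIdempotentElem.commute_iff hP |>.mp hPA
  by_contra! h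
  refine hA ⟨P.range, P.ker, hc.isClosed, hc.isClosed', hrange, hker,
    hc.isCompl.inf_eq_bot, hc.isCompl.sup_eq_top, ?_, ?_⟩
  · intro hrange0
    exact h.1 (ContinuousLinearMap.ext fun x =>
      LinearMap.congr_fun (LinearMap.range_eq_bot.mp hrange0) x)
  · intro hker0
    exact h.2 (ContinuousLinearMap.ext fun x =>
      LinearMap.ker_eq_bot.mp hker0 (congrFun (congrArg DFunLike.coe hP) x))

theorem stronglyIrreducible_of_forall_isIdempotentElem [CompleteSpace H] {A : H →L[ℂ] H}
    (h : ∀ P : H →L[ℂ] H, IsIdempotentElem P → Commute P A → P = 0 ∨ P = 1) :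
    StronglyIrreducible A := by
  rintro ⟨M, N, hM, hN, hMA, hNA, hinf, hsup, hM0, hN0⟩
  have hc : IsTopCompl M N :=
    IsCompl.isTopCompl_of_isClosed ⟨disjoint_iff.mpr hinf, codisjoint_iff.mpr hsup⟩ hM hN
  have hidem := isIdempotentElem_projectionL hc
  have hPA : Commute (M.projectionL N hc) A :=
    ContinuousLinearMap.IsIdempotentElem.commute_iff hidem |>.mpr
      ⟨by rw [range_projectionL]; exact hMA, by rw [ker_projectionL]; exact hNA⟩
  rcases h _ hidem hPA with h0 | h1
  · exact hM0 (by rw [← range_projectionL hc, h0]; exact LinearMap.range_zero)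
  · exact hN0 (by rw [← ker_projectionL hc, h1]; exact LinearMap.ker_id)

theorem not_stronglyIrreducible_smul_one (hH : 2 ≤ Module.rank ℂ H) (c : ℂ) :
    ¬ StronglyIrreducible (c • 1 : H →L[ℂ] H) := by
  obtain ⟨x, hx⟩ := rank_pos_iff_exists_ne_zero.mp (lt_of_lt_of_le (by norm_num) hH)
  have hinv : ∀ N : Submodule ℂ H, ∀ y ∈ N, (c • 1 : H →L[ℂ] H) y ∈ N :=
    fun N y hy => N.smul_mem c hy
  have hcompl := (ℂ ∙ x).isCompl_orthogonal
  exact fun hA => hA ⟨ℂ ∙ x, (ℂ ∙ x)ᗮ, (ℂ ∙ x).closed_of_finiteDimensional,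
    (ℂ ∙ x).isClosed_orthogonal, hinv _, hinv _, hcompl.inf_eq_bot, hcompl.sup_eq_top,
    by simpa using hx,
    by rw [Ne, orthogonal_eq_bot_iff]; exact span_singleton_ne_top_of_two_le_rank hH x⟩

end

/-- **Strong irreducibility of `A` is equivalent to indecomposability of the Kronecker
representation `(A, I)`.**  Endomorphisms of the representation `f_α = A`, `f_β = I` are
pairs `(T₁,T₂)` with `T₂ A = A T₁` and `T₂ = T₁`.
(1) If `A` is strongly irreducible, the only idempotent endomorphisms are `(0,0)`
and `(I,I)`.
(2) If moreover `dim 𝓗 ≥ 2`, the representation is not transitive: `(A,A)` is an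
endomorphism which is not a scalar multiple of the identity.
(3) Conversely, indecomposability implies strong irreducibility. -/
theorem stmt_3 {𝓗 : Type*} [NormedAddCommGroup 𝓗] [InnerProductSpace ℂ 𝓗]
    [CompleteSpace 𝓗] (A : 𝓗 →L[ℂ] 𝓗) :
    (StronglyIrreducible A →
      ∀ T₁ T₂ : 𝓗 →L[ℂ] 𝓗, T₁ ∘L T₁ = T₁ → T₂ ∘L T₂ = T₂ →
        T₂ ∘L A = A ∘L T₁ → T₂ = T₁ →
        (T₁ = 0 ∧ T₂ = 0) ∨ (T₁ = 1 ∧ T₂ = 1))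
    ∧
    (StronglyIrreducible A → 2 ≤ Module.rank ℂ 𝓗 →
      (¬ ∃ c : ℂ, A = c • (1 : 𝓗 →L[ℂ] 𝓗)) ∧
      ¬ (∀ T₁ T₂ : 𝓗 →L[ℂ] 𝓗, T₂ ∘L A = A ∘L T₁ → T₂ = T₁ →
          ∃ c : ℂ, T₁ = c • (1 : 𝓗 →L[ℂ] 𝓗) ∧ T₂ = c • (1 : 𝓗 →L[ℂ] 𝓗)))
    ∧
    ((∀ T₁ T₂ : 𝓗 →L[ℂ] 𝓗, T₁ ∘L T₁ = T₁ → T₂ ∘L T₂ = T₂ →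
        T₂ ∘L A = A ∘L T₁ → T₂ = T₁ →
        (T₁ = 0 ∧ T₂ = 0) ∨ (T₁ = 1 ∧ T₂ = 1)) →
      StronglyIrreducible A) := by
  refine ⟨?_, fun hA hrank => ?_, fun h => ?_⟩
  · rintro hA T₁ _ hidem - hcomm rfl
    rcases hA.eq_zero_or_eq_one hidem hcomm with h0 | h1
    exacts [.inl ⟨h0, h0⟩, .inr ⟨h1, h1⟩]
  · have hnot_scalar : ¬ ∃ c : ℂ, A = c • (1 : 𝓗 →L[ℂ] 𝓗) := by
      rintro ⟨c, rfl⟩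
      exact not_stronglyIrreducible_smul_one hrank c hA
    refine ⟨hnot_scalar, fun htrans => ?_⟩
    obtain ⟨c, hc, -⟩ := htrans A A rfl rfl
    exact hnot_scalar ⟨c, hc⟩
  · refine stronglyIrreducible_of_forall_isIdempotentElem fun P hidem hcomm => ?_
    rcases h P P hidem hidem hcomm rfl with ⟨h0, -⟩ | ⟨h1, -⟩
    exacts [.inl h0, .inr h1]
end

section
/- Let A and B be bounded operators on a complex Hilbert space 𝓗 and suppose xA + yB is invertible for some scalars x, y ∈ ℂ with y ≠ 0. Put T = (xA + yB)⁻¹A, λ₀ = 1/y and λ₁ = −x/y. Then the Kronecker-quiver representation with f_α = A, f_β = B is isomorphic to the representation with g_α = T, g_β = λ₀ I + λ₁ T: the pair (φ₁,φ₂) = (I, (xA + yB)⁻¹) consists of invertible bounded operators and satisfies φ₂ A = T φ₁ and φ₂ B = (λ₀ I + λ₁ T) φ₁. -/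
theorem Units.inv_mul_eq_of_val_eq_smul_add_smul {k R : Type*} [Field k] [Ring R] [Algebra k R]
    {a b : R} {x y : k} (hy : y ≠ 0) (u : Rˣ) (hu : (u : R) = x • a + y • b) :
    ↑u⁻¹ * b = (1 / y) • (1 : R) + (-(x / y)) • (↑u⁻¹ * a) := by
  have hcomb : x • (↑u⁻¹ * a) + y • (↑u⁻¹ * b) = 1 := by
    rw [← mul_smul_comm, ← mul_smul_comm, ← mul_add, ← hu, u.inv_mul]
  apply smul_right_injective R hy
  simp only [smul_add, smul_smul]
  rw [mul_one_div_cancel hy, mul_neg, mul_div_cancel₀ x hy, one_smul, ← hcomb]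
  module

theorem stmt_5_general {𝓗 : Type*} [NormedAddCommGroup 𝓗] [InnerProductSpace ℂ 𝓗]
    (A B : 𝓗 →L[ℂ] 𝓗) (x y : ℂ) (hy : y ≠ 0)
    (hinv : IsUnit (x • A + y • B)) :
    IsUnit (1 : 𝓗 →L[ℂ] 𝓗) ∧
    IsUnit ((↑hinv.unit⁻¹ : 𝓗 →L[ℂ] 𝓗)) ∧
    (↑hinv.unit⁻¹ : 𝓗 →L[ℂ] 𝓗) ∘L A =
      ((↑hinv.unit⁻¹ : 𝓗 →L[ℂ] 𝓗) ∘L A) ∘L (1 : 𝓗 →L[ℂ] 𝓗) ∧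
    (↑hinv.unit⁻¹ : 𝓗 →L[ℂ] 𝓗) ∘L B =
      ((1 / y) • (1 : 𝓗 →L[ℂ] 𝓗) +
        (-(x / y)) • ((↑hinv.unit⁻¹ : 𝓗 →L[ℂ] 𝓗) ∘L A)) ∘L (1 : 𝓗 →L[ℂ] 𝓗) := by
  refine ⟨isUnit_one, hinv.unit⁻¹.isUnit, (ContinuousLinearMap.comp_id _).symm, ?_⟩
  -- `f ∘L g` is `f * g` definitionally.
  exact (hinv.unit.inv_mul_eq_of_val_eq_smul_add_smul hy hinv.unit_spec).trans (mul_one _).symm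

/-- **Normalizing a Kronecker representation when a combination `xA + yB` is invertible.**
If `xA + yB` is invertible with `y ≠ 0`, put `T = (xA + yB)⁻¹ A`, `λ₀ = 1/y`,
`λ₁ = -x/y`.  Then the pair `(φ₁, φ₂) = (I, (xA + yB)⁻¹)` consists of invertible bounded
operators and satisfies `φ₂ A = T φ₁` and `φ₂ B = (λ₀ I + λ₁ T) φ₁`, i.e. the
representation `(A, B)` is isomorphic to `(T, λ₀ I + λ₁ T)`. -/
theorem stmt_5 {𝓗 : Type*} [NormedAddCommGroup 𝓗] [InnerProductSpace ℂ 𝓗]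
    [CompleteSpace 𝓗] (A B : 𝓗 →L[ℂ] 𝓗) (x y : ℂ) (hy : y ≠ 0)
    (hinv : IsUnit (x • A + y • B)) :
    IsUnit (1 : 𝓗 →L[ℂ] 𝓗) ∧
    IsUnit ((↑hinv.unit⁻¹ : 𝓗 →L[ℂ] 𝓗)) ∧
    (↑hinv.unit⁻¹ : 𝓗 →L[ℂ] 𝓗) ∘L A =
      ((↑hinv.unit⁻¹ : 𝓗 →L[ℂ] 𝓗) ∘L A) ∘L (1 : 𝓗 →L[ℂ] 𝓗) ∧
    (↑hinv.unit⁻¹ : 𝓗 →L[ℂ] 𝓗) ∘L B =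
      ((1 / y) • (1 : 𝓗 →L[ℂ] 𝓗) +
        (-(x / y)) • ((↑hinv.unit⁻¹ : 𝓗 →L[ℂ] 𝓗) ∘L A)) ∘L (1 : 𝓗 →L[ℂ] 𝓗) :=
  stmt_5_general A B x y hy hinv
end

section
/- Let T and S be bounded operators on a complex Hilbert space H, let n ≥ 1, and let λ₀, λ₁, …, λ_n be complex scalars with λ₀ ≠ 0. The (n+1)-Kronecker representations (M_T, f_T) and (M_S, f_S), where f_{α₀} = ∑_{k=0}^{n} λ_k T^k (resp. ∑ λ_k S^k) and f_{α_k} = T^k (resp. S^k) for k = 1, …, n, are isomorphic — i.e., there exist invertible bounded operators φ₁, φ₂ on H with φ₂ T^k = S^k φ₁ for k = 1, …, n and φ₂ (∑_{k=0}^{n} λ_k T^k) = (∑_{k=0}^{n} λ_k S^k) φ₁ — if and only if T and S are similar, i.e., there exists an invertible bounded operator W on H with W T = S W. -/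
/-!
If `(φ₁, φ₂)` is an isomorphism, then `φ₂ T^k = S^k φ₁` for `1 ≤ k ≤ n` lets the terms of
degree `≥ 1` cancel from the relation for `α₀`, leaving `λ₀ φ₂ = λ₀ φ₁`; hence `φ₂ = φ₁`, and
the relation for `α₁` says that `φ₁` conjugates `T` to `S`. Conversely a similarity `W`
intertwines all powers, so `(W, W)` is an isomorphism.
-/

open Finset

section

variable {R A : Type*} [Field R] [Ring A] [Algebra R A]

theorem SemiconjBy.sum_smul_pow {W T S : A} (h : SemiconjBy W T S) (s : Finset ℕ) (c : ℕ → R) :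
    SemiconjBy W (∑ k ∈ s, c k • T ^ k) (∑ k ∈ s, c k • S ^ k) := by
  rw [SemiconjBy, mul_sum, sum_mul]
  exact sum_congr rfl fun k _ => ((h.pow_right k).smul_right (c k)).eq

theorem eq_of_mul_pow_eq_pow_mul_of_mul_sum_smul_pow {a b T S : A} {n : ℕ} {c : ℕ → R}
    (hpow : ∀ k, 1 ≤ k → k ≤ n → b * T ^ k = S ^ k * a)
    (hsum : b * ∑ k ∈ range (n + 1), c k • T ^ k = (∑ k ∈ range (n + 1), c k • S ^ k) * a)
    (hc : c 0 ≠ 0) : b = a := by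
  have hhigh : b * ∑ k ∈ range n, c (k + 1) • T ^ (k + 1) =
      (∑ k ∈ range n, c (k + 1) • S ^ (k + 1)) * a := by
    rw [mul_sum, sum_mul]
    refine sum_congr rfl fun k hk => ?_
    rw [mul_smul_comm, smul_mul_assoc, hpow (k + 1) k.succ_pos (mem_range.mp hk)]
  rw [sum_range_succ', sum_range_succ', mul_add, add_mul, hhigh] at hsum
  have hconst : c 0 • b = c 0 • a := by
    simpa only [pow_zero, mul_smul_comm, smul_mul_assoc, mul_one, one_mul] using
      add_left_cancel hsum
  exact smul_right_injective A hc hconst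

end

theorem stmt_8_general {H : Type*} [NormedAddCommGroup H] [InnerProductSpace ℂ H]
    (T S : H →L[ℂ] H) (n : ℕ) (hn : 1 ≤ n)
    (lam : ℕ → ℂ) (hlam : lam 0 ≠ 0) :
    (∃ φ₁ φ₂ : H →L[ℂ] H, IsUnit φ₁ ∧ IsUnit φ₂ ∧
      (∀ k : ℕ, 1 ≤ k → k ≤ n →
        φ₂ ∘L (T ^ k : H →L[ℂ] H) = (S ^ k : H →L[ℂ] H) ∘L φ₁) ∧
      φ₂ ∘L (∑ k ∈ Finset.range (n + 1), lam k • T ^ k) =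
        (∑ k ∈ Finset.range (n + 1), lam k • S ^ k) ∘L φ₁)
    ↔ (∃ W : H →L[ℂ] H, IsUnit W ∧ W ∘L T = S ∘L W) := by
  constructor
  · rintro ⟨φ₁, φ₂, hφ₁, -, hpow, hsum⟩
    obtain rfl : φ₂ = φ₁ := eq_of_mul_pow_eq_pow_mul_of_mul_sum_smul_pow hpow hsum hlam
    refine ⟨φ₂, hφ₁, ?_⟩
    simpa only [pow_one] using hpow 1 le_rfl hn
  · rintro ⟨W, hW, hWT⟩
    have hsemiconj : SemiconjBy W T S := hWT
    exact ⟨W, W, hW, hW, fun k _ _ => (hsemiconj.pow_right k).eq,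
      (hsemiconj.sum_smul_pow _ lam).eq⟩

/-- **Isomorphism of the `(n+1)`-Kronecker representations `(M_T, f_T)` and `(M_S, f_S)`
is equivalent to similarity of `T` and `S`.**
Here `f_{α₀} = ∑_{k=0}^n λ_k T^k` (resp. `S`), `f_{α_k} = T^k` (resp. `S^k`) for
`k = 1, …, n`, with `λ₀ ≠ 0`.  An isomorphism is a pair of invertible bounded operators
`(φ₁, φ₂)` intertwining all the arrow operators; similarity of `T` and `S` means there is
an invertible bounded operator `W` with `W T = S W`. -/
theorem stmt_8 {H : Type*} [NormedAddCommGroup H] [InnerProductSpace ℂ H]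
    [CompleteSpace H] (T S : H →L[ℂ] H) (n : ℕ) (hn : 1 ≤ n)
    (lam : ℕ → ℂ) (hlam : lam 0 ≠ 0) :
    (∃ φ₁ φ₂ : H →L[ℂ] H, IsUnit φ₁ ∧ IsUnit φ₂ ∧
      (∀ k : ℕ, 1 ≤ k → k ≤ n →
        φ₂ ∘L (T ^ k : H →L[ℂ] H) = (S ^ k : H →L[ℂ] H) ∘L φ₁) ∧
      φ₂ ∘L (∑ k ∈ Finset.range (n + 1), lam k • T ^ k) =
        (∑ k ∈ Finset.range (n + 1), lam k • S ^ k) ∘L φ₁)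
    ↔ (∃ W : H →L[ℂ] H, IsUnit W ∧ W ∘L T = S ∘L W) :=
  stmt_8_general T S n hn lam hlam
end

section
/- Let S be the unilateral shift on ℓ²(ℕ) and let λ, μ ∈ ℂ satisfy |λ − μ| > 2. Then every bounded operator T on ℓ²(ℕ) satisfying T(λI + S) = (μI + S)T is zero. Consequently the Kronecker representations (H^λ, f^λ) and (H^μ, f^μ), given by f^λ_α = I, f^λ_β = λI + S and f^μ_α = I, f^μ_β = μI + S on ℓ²(ℕ), are relatively prime: Hom((H^λ,f^λ),(H^μ,f^μ)) = 0 and Hom((H^μ,f^μ),(H^λ,f^λ)) = 0. -/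
/-!
Rewriting `T (λ + S) = (μ + S) T` as `(λ - μ) T = S T - T S` gives `|λ - μ| ‖T‖ ≤ 2 ‖S‖ ‖T‖`,
and the shift is an isometry, so `‖T‖ = 0` once `|λ - μ| > 2`. For a homomorphism `(T₁, T₂)` of
the Kronecker representations the arrow `α` (the identity on both sides) forces `T₁ = T₂`, which
reduces the second and third claims to the first.
-/

open scoped ENNReal

namespace ContinuousLinearMap

variable {𝕜 E F : Type*} [NontriviallyNormedField 𝕜] [NormedAddCommGroup E] [NormedSpace 𝕜 E]
  [NormedAddCommGroup F] [NormedSpace 𝕜 F]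

theorem eq_zero_of_comp_smul_one_add_eq {a b : 𝕜} {S : E →L[𝕜] E} {S' : F →L[𝕜] F}
    (hab : ‖S‖ + ‖S'‖ < ‖a - b‖) {T : E →L[𝕜] F}
    (h : T ∘L (a • 1 + S) = (b • 1 + S') ∘L T) : T = 0 := by
  have hcomm : (a - b) • T = S' ∘L T - T ∘L S := by
    simp only [comp_add, add_comp, comp_smul, smul_comp, one_def, comp_id, id_comp] at h
    rw [sub_smul, sub_eq_sub_iff_add_eq_add, h, add_comm]
  have hle : ‖a - b‖ * ‖T‖ ≤ (‖S‖ + ‖S'‖) * ‖T‖ :=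
    calc ‖a - b‖ * ‖T‖ = ‖S' ∘L T - T ∘L S‖ := by rw [← hcomm, norm_smul]
      _ ≤ ‖S'‖ * ‖T‖ + ‖T‖ * ‖S‖ :=
        (norm_sub_le _ _).trans (add_le_add (opNorm_comp_le _ _) (opNorm_comp_le _ _))
      _ = (‖S‖ + ‖S'‖) * ‖T‖ := by ring
  by_contra hT
  exact hab.not_ge (le_of_mul_le_mul_right hle (norm_pos_iff.mpr hT))

end ContinuousLinearMap

namespace lp

variable {E : Type*} [NormedAddCommGroup E] {p : ℝ≥0∞}

theorem norm_sum_single_add_one (hp : 0 < p.toReal) (s : Finset ℕ) (c : ℕ → E) :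
    ‖∑ i ∈ s, lp.single (E := fun _ ↦ E) p (i + 1) (c i)‖ =
      ‖∑ i ∈ s, lp.single (E := fun _ ↦ E) p i (c i)‖ := by
  have hshift : ∑ i ∈ s, lp.single (E := fun _ ↦ E) p (i + 1) (c i)
      = ∑ j ∈ s.map (addRightEmbedding 1), lp.single (E := fun _ ↦ E) p j (c j.pred) := by
    simp [Finset.sum_map]
  refine Real.rpow_left_injOn hp.ne' (lp.norm_nonneg' _) (lp.norm_nonneg' _) ?_
  dsimp only
  rw [hshift, lp.norm_sum_single hp, lp.norm_sum_single hp, Finset.sum_map]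
  simp

theorem norm_apply_of_map_single_eq_single_add_one {𝕜 : Type*} [NormedField 𝕜] [Fact (1 ≤ p)]
    (hp : p ≠ ∞) {S : lp (fun _ : ℕ ↦ 𝕜) p →L[𝕜] lp (fun _ : ℕ ↦ 𝕜) p}
    (hS : ∀ n, S (lp.single p n 1) = lp.single p (n + 1) 1) (f : lp (fun _ : ℕ ↦ 𝕜) p) :
    ‖S f‖ = ‖f‖ := by
  have hp' : 0 < p.toReal := ENNReal.toReal_pos (zero_lt_one.trans_le Fact.out).ne' hp
  have hpartial : ∀ s : Finset ℕ,
      ‖S (∑ i ∈ s, lp.single p i (f i))‖ = ‖∑ i ∈ s, lp.single p i (f i)‖ := by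
    intro s
    have hsingle : ∀ i, S (lp.single p i (f i)) = lp.single p (i + 1) (f i) := fun i ↦ by
      rw [← mul_one (f i), ← smul_eq_mul, lp.single_smul, map_smul, hS, lp.single_smul]
    simp only [map_sum, hsingle]
    exact norm_sum_single_add_one hp' s f
  have hsum := lp.hasSum_single hp f
  refine tendsto_nhds_unique ?_ hsum.norm
  simpa only [Function.comp_def, hpartial] using ((S.continuous.tendsto f).comp hsum).norm

end lp

/-- **Kronecker representations `(I, λI + S)` and `(I, μI + S)` with `|λ - μ| > 2` are
relatively prime.**
Here `S` is the unilateral shift on `ℓ²(ℕ)` (`S e_n = e_{n+1}` on the canonical basis).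
Every bounded operator `T` with `T (λI + S) = (μI + S) T` is zero; consequently
`Hom((H^λ,f^λ),(H^μ,f^μ)) = 0` and `Hom((H^μ,f^μ),(H^λ,f^λ)) = 0`, where a homomorphism
is a pair `(T₁,T₂)` with `T₂ ∘ I = I ∘ T₁` and `T₂ (λI + S) = (μI + S) T₁`. -/
theorem stmt_9
    (S : lp (fun _ : ℕ => ℂ) 2 →L[ℂ] lp (fun _ : ℕ => ℂ) 2)
    (hS : ∀ n : ℕ, S (lp.single 2 n (1 : ℂ)) = lp.single 2 (n + 1) (1 : ℂ))
    (l m : ℂ) (hlm : 2 < ‖l - m‖) :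
    (∀ T : lp (fun _ : ℕ => ℂ) 2 →L[ℂ] lp (fun _ : ℕ => ℂ) 2,
      T ∘L (l • (1 : lp (fun _ : ℕ => ℂ) 2 →L[ℂ] lp (fun _ : ℕ => ℂ) 2) + S) =
        (m • (1 : lp (fun _ : ℕ => ℂ) 2 →L[ℂ] lp (fun _ : ℕ => ℂ) 2) + S) ∘L T →
      T = 0)
    ∧
    (∀ T₁ T₂ : lp (fun _ : ℕ => ℂ) 2 →L[ℂ] lp (fun _ : ℕ => ℂ) 2,
      T₂ ∘L (1 : lp (fun _ : ℕ => ℂ) 2 →L[ℂ] lp (fun _ : ℕ => ℂ) 2) =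
        (1 : lp (fun _ : ℕ => ℂ) 2 →L[ℂ] lp (fun _ : ℕ => ℂ) 2) ∘L T₁ →
      T₂ ∘L (l • (1 : lp (fun _ : ℕ => ℂ) 2 →L[ℂ] lp (fun _ : ℕ => ℂ) 2) + S) =
        (m • (1 : lp (fun _ : ℕ => ℂ) 2 →L[ℂ] lp (fun _ : ℕ => ℂ) 2) + S) ∘L T₁ →
      T₁ = 0 ∧ T₂ = 0)
    ∧
    (∀ T₁ T₂ : lp (fun _ : ℕ => ℂ) 2 →L[ℂ] lp (fun _ : ℕ => ℂ) 2,
      T₂ ∘L (1 : lp (fun _ : ℕ => ℂ) 2 →L[ℂ] lp (fun _ : ℕ => ℂ) 2) =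
        (1 : lp (fun _ : ℕ => ℂ) 2 →L[ℂ] lp (fun _ : ℕ => ℂ) 2) ∘L T₁ →
      T₂ ∘L (m • (1 : lp (fun _ : ℕ => ℂ) 2 →L[ℂ] lp (fun _ : ℕ => ℂ) 2) + S) =
        (l • (1 : lp (fun _ : ℕ => ℂ) 2 →L[ℂ] lp (fun _ : ℕ => ℂ) 2) + S) ∘L T₁ →
      T₁ = 0 ∧ T₂ = 0) := by
  have hS1 : ‖S‖ ≤ 1 := S.opNorm_le_bound zero_le_one fun f ↦ by
    rw [lp.norm_apply_of_map_single_eq_single_add_one ENNReal.ofNat_ne_top hS, one_mul]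
  have hS2 : ‖S‖ + ‖S‖ < ‖l - m‖ := by linarith
  have hrel : ∀ {a b : ℂ}, ‖S‖ + ‖S‖ < ‖a - b‖ → ∀ T₁ T₂ : lp (fun _ : ℕ => ℂ) 2 →L[ℂ] _,
      T₂ ∘L 1 = 1 ∘L T₁ → T₂ ∘L (a • 1 + S) = (b • 1 + S) ∘L T₁ → T₁ = 0 ∧ T₂ = 0 := by
    intro a b hab T₁ T₂ hid h
    obtain rfl : T₂ = T₁ := by simpa only [ContinuousLinearMap.one_def, ContinuousLinearMap.comp_id,
      ContinuousLinearMap.id_comp] using hid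
    have hT := ContinuousLinearMap.eq_zero_of_comp_smul_one_add_eq hab h
    exact ⟨hT, hT⟩
  exact ⟨fun T ↦ ContinuousLinearMap.eq_zero_of_comp_smul_one_add_eq hS2, hrel hS2,
    hrel (by rwa [norm_sub_rev])⟩
end

section
/- Let S be the unilateral shift on ℓ²(ℕ) and let λ, μ ∈ ℂ with λ ≠ μ. Then λI + S and μI + S are not similar: there is no invertible bounded operator V on ℓ²(ℕ) with V(λI + S) = (μI + S)V. Consequently the Kronecker representations (H^λ, f^λ) with f^λ_α = I, f^λ_β = λI + S, for λ ∈ ℂ, form an uncountable family of pairwise non-isomorphic indecomposable Hilbert representations of the Kronecker quiver. -/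
/-!
Similar operators have the same spectrum, and `σ(λ + S) = λ + σ(S)`; since a nonempty compact
subset of `ℂ` is not a proper translate of itself, `λ + S` and `μ + S` are similar only if
`λ = μ`. An endomorphism of `(I, λ + S)` is a pair `(T, T)` with `T` commuting with `S`.
Reading `x ∈ ℓ²` as the power series `∑ xₙ Xⁿ`, `S` is multiplication by `X`, so such a `T` is
multiplication by the power series of `T e₀`. An idempotent `T` thus gives an idempotent of
the domain `ℂ⟦X⟧`, which is `0` or `1`.
-/

open PowerSeries Pointwise
open Finset.HasAntidiagonal (antidiagonal)

local notation "ℓ²" => lp (fun _ : ℕ => ℂ) 2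

theorem IsCompact.eq_zero_of_vadd_eq_self {E : Type*} [NormedAddCommGroup E]
    [InnerProductSpace ℝ E] {K : Set E} (hK : IsCompact K) (hne : K.Nonempty) {c : E}
    (h : c +ᵥ K = K) : c = 0 := by
  obtain ⟨z, hzK, hmax⟩ := hK.exists_isMaxOn hne
    (continuous_const.inner continuous_id : Continuous fun z : E => inner ℝ c z).continuousOn
  have hle : inner ℝ c (c + z) ≤ inner ℝ c z := hmax (h ▸ Set.vadd_mem_vadd_set hzK)
  rwa [inner_add_right, add_le_iff_nonpos_left, real_inner_self_nonpos] at hle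

theorem SemiconjBy.eq_of_algebraMap_add {A : Type*} [NormedRing A] [NormedAlgebra ℂ A]
    [CompleteSpace A] [Nontrivial A] {u a : A} {l m : ℂ} (hu : IsUnit u)
    (h : SemiconjBy u (algebraMap ℂ A l + a) (algebraMap ℂ A m + a)) : l = m := by
  obtain ⟨u, rfl⟩ := hu
  have hσ : spectrum ℂ (algebraMap ℂ A l + a) = spectrum ℂ (algebraMap ℂ A m + a) := by
    rw [← spectrum.units_conjugate (u := u), h.eq, Units.mul_inv_cancel_right]
  rw [← spectrum.singleton_add_eq, ← spectrum.singleton_add_eq] at hσ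
  have hvadd : l +ᵥ spectrum ℂ a = m +ᵥ spectrum ℂ a := by
    rwa [← Set.singleton_vadd, ← Set.singleton_vadd]
  refine sub_eq_zero.mp <| (spectrum.isCompact a).eq_zero_of_vadd_eq_self
    (spectrum.nonempty a) ?_
  rw [sub_eq_neg_add, add_vadd, hvadd, neg_vadd_vadd]

theorem ContinuousLinearMap.not_exists_isUnit_comp_smul_one_add_eq {E : Type*}
    [NormedAddCommGroup E] [NormedSpace ℂ E] [CompleteSpace E] [Nontrivial E]
    (S : E →L[ℂ] E) {l m : ℂ} (hlm : l ≠ m) :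
    ¬ ∃ V : E →L[ℂ] E, IsUnit V ∧ V ∘L (l • 1 + S) = (m • 1 + S) ∘L V := by
  rintro ⟨V, hV, h⟩
  refine hlm (SemiconjBy.eq_of_algebraMap_add (a := S) hV ?_)
  simpa only [SemiconjBy, Algebra.algebraMap_eq_smul_one, ContinuousLinearMap.mul_def] using h

namespace lp

variable {𝕜 ι : Type*} [NormedField 𝕜] [DecidableEq ι] {p : ENNReal}

theorem ext_continuousLinearMap_single_one [Fact (1 ≤ p)] (hp : p ≠ ⊤) {F : Type*}
    [AddCommMonoid F] [Module 𝕜 F] [TopologicalSpace F] [T2Space F]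
    {f g : lp (fun _ : ι => 𝕜) p →L[𝕜] F}
    (h : ∀ i, f (lp.single p i 1) = g (lp.single p i 1)) : f = g :=
  lp.ext_continuousLinearMap hp fun i =>
    ContinuousLinearMap.ext_ring (by simpa [lp.singleContinuousLinearMap_apply] using h i)

instance [Nonempty ι] : Nontrivial (lp (fun _ : ι => 𝕜) p) :=
  let i := Classical.arbitrary ι
  ⟨⟨lp.single p i 1, 0, fun h => by simpa using congrArg (fun x : lp _ p => x i) h⟩⟩

theorem mk_single_one (n : ℕ) : mk ⇑(lp.single p n (1 : 𝕜)) = X ^ n := by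
  ext k
  simp [coeff_X_pow, lp.single_apply, Pi.single_apply]

theorem eq_of_mk_eq {x y : lp (fun _ : ℕ => 𝕜) p} (h : mk ⇑x = mk ⇑y) : x = y :=
  lp.ext <| funext fun n => by simpa using congrArg (coeff n) h

end lp

section Shift

variable {S : ℓ² →L[ℂ] ℓ²} (hS : ∀ n : ℕ, S (lp.single 2 n 1) = lp.single 2 (n + 1) 1)
include hS

theorem mk_shift_apply (x : ℓ²) : mk ⇑(S x) = X * mk ⇑x := by
  have h0 : lp.evalCLM ℂ _ 2 0 ∘L S = 0 :=
    lp.ext_continuousLinearMap_single_one (by norm_num) fun n => by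
      simp [hS, lp.evalCLM, lp.single_apply]
  have hsucc (n : ℕ) : lp.evalCLM ℂ _ 2 (n + 1) ∘L S = lp.evalCLM ℂ _ 2 n :=
    lp.ext_continuousLinearMap_single_one (by norm_num) fun k => by
      simp [hS, lp.evalCLM, lp.single_apply, Pi.single_apply]
  ext (_ | n)
  · simpa [lp.evalCLM] using DFunLike.congr_fun h0 x
  · simpa [lp.evalCLM] using DFunLike.congr_fun (hsucc n) x

theorem mk_apply_single_one_of_commute {T : ℓ² →L[ℂ] ℓ²} (hT : Commute T S) (k : ℕ) :
    mk ⇑(T (lp.single 2 k 1)) = X ^ k * mk ⇑(T (lp.single 2 0 1)) := by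
  induction k with
  | zero => simp
  | succ k ih =>
    have hTS : T (S (lp.single 2 k 1)) = S (T (lp.single 2 k 1)) :=
      DFunLike.congr_fun hT.eq _
    rw [← hS, hTS, mk_shift_apply hS, ih, pow_succ', mul_assoc]

theorem mk_apply_of_commute {T : ℓ² →L[ℂ] ℓ²} (hT : Commute T S) (y : ℓ²) :
    mk ⇑(T y) = mk ⇑y * mk ⇑(T (lp.single 2 0 1)) := by
  set x := T (lp.single 2 0 1)
  ext n
  let convolve : ℓ² →L[ℂ] ℂ := ∑ p ∈ antidiagonal n, x p.2 • lp.evalCLM ℂ _ 2 p.1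
  have hconvolve (z : ℓ²) : convolve z = coeff n (mk ⇑z * mk ⇑x) := by
    simp [convolve, lp.evalCLM, coeff_mul, mul_comm]
  have hcoeff : lp.evalCLM ℂ _ 2 n ∘L T = convolve :=
    lp.ext_continuousLinearMap_single_one (by norm_num) fun k => by
      rw [hconvolve, lp.mk_single_one, ← mk_apply_single_one_of_commute hS hT]
      simp [lp.evalCLM]
  simpa [lp.evalCLM] using (DFunLike.congr_fun hcoeff y).trans (hconvolve y)

theorem eq_zero_or_one_of_isIdempotentElem_of_commute {T : ℓ² →L[ℂ] ℓ²}
    (hT : IsIdempotentElem T) (hTS : Commute T S) : T = 0 ∨ T = 1 := by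
  have hx : IsIdempotentElem (mk ⇑(T (lp.single 2 0 1))) := by
    have hTT : T (T (lp.single 2 0 1)) = T (lp.single 2 0 1) := DFunLike.congr_fun hT _
    rw [IsIdempotentElem, ← mk_apply_of_commute hS hTS, hTT]
  rcases IsIdempotentElem.iff_eq_zero_or_one.mp hx with h | h
  · refine .inl <| ContinuousLinearMap.ext fun y => lp.eq_of_mk_eq ?_
    rw [mk_apply_of_commute hS hTS, h, mul_zero]
    rfl
  · refine .inr <| ContinuousLinearMap.ext fun y => lp.eq_of_mk_eq ?_
    rw [mk_apply_of_commute hS hTS, h, mul_one]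
    rfl

end Shift

/-- **Uncountably many non-isomorphic indecomposable Kronecker representations
`(I, λI + S)`.**
Here `S` is the unilateral shift on `ℓ²(ℕ)`.  For `λ ≠ μ`: (1) `λI + S` and `μI + S` are
not similar (no invertible bounded `V` with `V (λI + S) = (μI + S) V`); (2) consequently
the representations `(H^λ,f^λ)` and `(H^μ,f^μ)` are not isomorphic; and (3) each
representation `(H^λ,f^λ)` is indecomposable.  Thus the `(H^λ,f^λ)`, `λ ∈ ℂ`, form an
uncountable family of pairwise non-isomorphic indecomposable representations. -/
theorem stmt_10
    (S : lp (fun _ : ℕ => ℂ) 2 →L[ℂ] lp (fun _ : ℕ => ℂ) 2)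
    (hS : ∀ n : ℕ, S (lp.single 2 n (1 : ℂ)) = lp.single 2 (n + 1) (1 : ℂ)) :
    (∀ l m : ℂ, l ≠ m →
      ¬ ∃ V : lp (fun _ : ℕ => ℂ) 2 →L[ℂ] lp (fun _ : ℕ => ℂ) 2, IsUnit V ∧
        V ∘L (l • (1 : lp (fun _ : ℕ => ℂ) 2 →L[ℂ] lp (fun _ : ℕ => ℂ) 2) + S) =
          (m • (1 : lp (fun _ : ℕ => ℂ) 2 →L[ℂ] lp (fun _ : ℕ => ℂ) 2) + S) ∘L V)
    ∧
    (∀ l m : ℂ, l ≠ m →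
      ¬ ∃ φ₁ φ₂ : lp (fun _ : ℕ => ℂ) 2 →L[ℂ] lp (fun _ : ℕ => ℂ) 2,
        IsUnit φ₁ ∧ IsUnit φ₂ ∧
        φ₂ ∘L (1 : lp (fun _ : ℕ => ℂ) 2 →L[ℂ] lp (fun _ : ℕ => ℂ) 2) =
          (1 : lp (fun _ : ℕ => ℂ) 2 →L[ℂ] lp (fun _ : ℕ => ℂ) 2) ∘L φ₁ ∧
        φ₂ ∘L (l • (1 : lp (fun _ : ℕ => ℂ) 2 →L[ℂ] lp (fun _ : ℕ => ℂ) 2) + S) =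
          (m • (1 : lp (fun _ : ℕ => ℂ) 2 →L[ℂ] lp (fun _ : ℕ => ℂ) 2) + S) ∘L φ₁)
    ∧
    (∀ l : ℂ, ∀ T₁ T₂ : lp (fun _ : ℕ => ℂ) 2 →L[ℂ] lp (fun _ : ℕ => ℂ) 2,
      T₁ ∘L T₁ = T₁ → T₂ ∘L T₂ = T₂ →
      T₂ ∘L (1 : lp (fun _ : ℕ => ℂ) 2 →L[ℂ] lp (fun _ : ℕ => ℂ) 2) =
        (1 : lp (fun _ : ℕ => ℂ) 2 →L[ℂ] lp (fun _ : ℕ => ℂ) 2) ∘L T₁ →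
      T₂ ∘L (l • (1 : lp (fun _ : ℕ => ℂ) 2 →L[ℂ] lp (fun _ : ℕ => ℂ) 2) + S) =
        (l • (1 : lp (fun _ : ℕ => ℂ) 2 →L[ℂ] lp (fun _ : ℕ => ℂ) 2) + S) ∘L T₁ →
      (T₁ = 0 ∧ T₂ = 0) ∨ (T₁ = 1 ∧ T₂ = 1)) := by
  refine ⟨fun l m hlm => S.not_exists_isUnit_comp_smul_one_add_eq hlm, ?_, ?_⟩
  · rintro l m hlm ⟨φ₁, φ₂, hφ₁, -, hφ, hφS⟩
    obtain rfl : φ₂ = φ₁ := by simpa [ContinuousLinearMap.one_def] using hφ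
    exact S.not_exists_isUnit_comp_smul_one_add_eq hlm ⟨φ₂, hφ₁, hφS⟩
  · rintro l T₁ T₂ hT₁ - hT hTS
    obtain rfl : T₂ = T₁ := by simpa [ContinuousLinearMap.one_def] using hT
    have hcomm : Commute T₂ (algebraMap ℂ _ l + S) := by
      simpa only [Commute, SemiconjBy, Algebra.algebraMap_eq_smul_one,
        ContinuousLinearMap.mul_def] using hTS
    rcases eq_zero_or_one_of_isIdempotentElem_of_commute hS hT₁
      (by simpa using hcomm.sub_right (Algebra.commutes l T₂).symm) with h | h
    · exact .inl ⟨h, h⟩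
    · exact .inr ⟨h, h⟩
end

section
/- Let S be the unilateral shift on ℓ²(ℕ) with canonical orthonormal basis (e_n)_{n≥1}. Let λ = (λ_n)_{n≥1} be a bounded complex sequence with λ_i ≠ λ_j whenever i ≠ j, and let w = (w_n)_{n≥1} be a square-summable complex sequence with w_n ≠ 0 for every n. Let T be the bounded operator on ℓ²(ℕ) defined by T x = (∑_{n≥1} w_n x_n) e₁ + ∑_{n≥1} λ_n x_n e_{n+1} for x = (x_n), i.e., T = S D_λ + θ_{e₁, w̄} is the perturbation of the weighted shift S D_λ by the rank-one operator θ_{e₁, w̄}. Then the Kronecker representation with f_α = S and f_β = T on H₁ = H₂ = ℓ²(ℕ) is transitive: whenever φ and ψ are bounded operators on ℓ²(ℕ) with S φ = ψ S and T φ = ψ T, there is a scalar α ∈ ℂ with φ = ψ = α I. -/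
/-!
Testing the intertwining relations `S φ = ψ S` and `T φ = ψ T` on the basis vectors `e n` gives
`ψ e_{n+1} = S φ e_n` and `T φ e_n = w n • ψ e₀ + λ n • S φ e_n`. Reading off the coordinate
`m + 1` of the second identity gives `(λ m - λ n) (φ e_n)_m = w n (ψ e₀)_{m+1}`: taking `m = n`
and `w n ≠ 0` shows `ψ e₀ = a e₀` for `a = (ψ e₀)₀`, and then the distinctness of the `λ`'s makes
`φ` diagonal. The coordinate `0` of the same identity forces every diagonal entry of `φ` to be
`a`, and the first relation propagates `ψ = a` along the shift.
-/

open scoped lp ENNReal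

namespace lp

variable {α 𝕜 F : Type*} {p : ℝ≥0∞}

@[simp]
theorem evalCLM_apply {E : α → Type*} [NormedRing 𝕜] [∀ i, NormedAddCommGroup (E i)]
    [∀ i, Module 𝕜 (E i)] [∀ i, IsBoundedSMul 𝕜 (E i)] [Fact (1 ≤ p)] (i : α) (x : lp E p) :
    lp.evalCLM 𝕜 E p i x = x i :=
  rfl

theorem ext_single [DecidableEq α] {E : α → Type*} [NormedRing 𝕜]
    [∀ i, NormedAddCommGroup (E i)] [∀ i, Module 𝕜 (E i)] [∀ i, IsBoundedSMul 𝕜 (E i)]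
    [TopologicalSpace F] [AddCommMonoid F] [Module 𝕜 F] [T2Space F] [Fact (1 ≤ p)] (hp : p ≠ ∞)
    {A B : lp E p →L[𝕜] F}
    (h : ∀ i x, A (lp.single p i x) = B (lp.single p i x)) : A = B :=
  ContinuousLinearMap.ext fun f =>
    ((lp.hasSum_single hp f).mapL A).unique <| by
      simpa only [h] using (lp.hasSum_single hp f).mapL B

theorem ext_single_one [DecidableEq α] [NormedField 𝕜] [TopologicalSpace F] [AddCommMonoid F]
    [Module 𝕜 F] [T2Space F] [Fact (1 ≤ p)] (hp : p ≠ ∞) {A B : lp (fun _ : α => 𝕜) p →L[𝕜] F}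
    (h : ∀ i, A (lp.single p i 1) = B (lp.single p i 1)) : A = B :=
  ext_single hp fun i c => by
    rw [← mul_one c, ← smul_eq_mul, lp.single_smul, map_smul, map_smul, h]

theorem eq_smul_single_of_apply_ne [DecidableEq α] [NormedField 𝕜] {x : lp (fun _ : α => 𝕜) p}
    {i : α} (h : ∀ j, j ≠ i → x j = 0) : x = x i • lp.single p i 1 := by
  ext j
  by_cases hj : j = i
  · subst hj; simp
  · simp [hj, h j hj]

end lp

namespace KroneckerShift

variable {𝕜 : Type*} [NormedField 𝕜]

theorem apply_succ_of_map_single {A : ℓ²(ℕ, 𝕜) →L[𝕜] ℓ²(ℕ, 𝕜)} {c d : ℕ → 𝕜}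
    (hA : ∀ n, A (lp.single 2 n 1) = d n • lp.single 2 0 1 + c n • lp.single 2 (n + 1) 1)
    (x : ℓ²(ℕ, 𝕜)) (m : ℕ) : A x (m + 1) = c m * x m := by
  have : (lp.evalCLM 𝕜 _ 2 (m + 1)).comp A = c m • lp.evalCLM 𝕜 _ 2 m := by
    refine lp.ext_single_one ENNReal.ofNat_ne_top fun n => ?_
    simp only [ContinuousLinearMap.comp_apply, smul_apply, hA,
      lp.evalCLM_apply, lp.coeFn_add, lp.coeFn_smul, Pi.add_apply, Pi.smul_apply, smul_eq_mul]
    by_cases h : m = n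
    · subst h; simp
    · simp [lp.single_apply, h]
  exact congr($this x)

theorem shift_apply_succ {S : ℓ²(ℕ, 𝕜) →L[𝕜] ℓ²(ℕ, 𝕜)}
    (hS : ∀ n, S (lp.single 2 n 1) = lp.single 2 (n + 1) 1) (x : ℓ²(ℕ, 𝕜)) (m : ℕ) :
    S x (m + 1) = x m := by
  simpa using apply_succ_of_map_single (c := 1) (d := 0) (by simpa using hS) x m

theorem shift_apply_zero {S : ℓ²(ℕ, 𝕜) →L[𝕜] ℓ²(ℕ, 𝕜)}
    (hS : ∀ n, S (lp.single 2 n 1) = lp.single 2 (n + 1) 1) (x : ℓ²(ℕ, 𝕜)) : S x 0 = 0 := by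
  have : (lp.evalCLM 𝕜 _ 2 0).comp S = 0 :=
    lp.ext_single_one ENNReal.ofNat_ne_top fun n => by simp [hS, lp.single_apply]
  exact congr($this x)

variable {S T φ ψ : ℓ²(ℕ, 𝕜) →L[𝕜] ℓ²(ℕ, 𝕜)} {lam w : ℕ → 𝕜}

theorem psi_single_succ (hS : ∀ n, S (lp.single 2 n 1) = lp.single 2 (n + 1) 1)
    (hSc : S ∘L φ = ψ ∘L S) (n : ℕ) : ψ (lp.single 2 (n + 1) 1) = S (φ (lp.single 2 n 1)) := by
  simpa [hS] using congr($hSc (lp.single 2 n 1)).symm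

theorem T_apply_phi_single (hS : ∀ n, S (lp.single 2 n 1) = lp.single 2 (n + 1) 1)
    (hT : ∀ n, T (lp.single 2 n 1) = w n • lp.single 2 0 1 + lam n • lp.single 2 (n + 1) 1)
    (hSc : S ∘L φ = ψ ∘L S) (hTc : T ∘L φ = ψ ∘L T) (n : ℕ) :
    T (φ (lp.single 2 n 1)) = w n • ψ (lp.single 2 0 1) + lam n • S (φ (lp.single 2 n 1)) := by
  simpa [hT, psi_single_succ hS hSc] using congr($hTc (lp.single 2 n 1))

theorem sub_mul_phi_single_apply (hS : ∀ n, S (lp.single 2 n 1) = lp.single 2 (n + 1) 1)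
    (hT : ∀ n, T (lp.single 2 n 1) = w n • lp.single 2 0 1 + lam n • lp.single 2 (n + 1) 1)
    (hSc : S ∘L φ = ψ ∘L S) (hTc : T ∘L φ = ψ ∘L T) (n m : ℕ) :
    (lam m - lam n) * φ (lp.single 2 n 1) m = w n * ψ (lp.single 2 0 1) (m + 1) := by
  have h := congr($(T_apply_phi_single hS hT hSc hTc n) (m + 1))
  simp only [lp.coeFn_add, lp.coeFn_smul, Pi.add_apply, Pi.smul_apply, smul_eq_mul,
    apply_succ_of_map_single hT, shift_apply_succ hS] at h
  linear_combination h

theorem psi_single_zero_apply_succ (hS : ∀ n, S (lp.single 2 n 1) = lp.single 2 (n + 1) 1)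
    (hT : ∀ n, T (lp.single 2 n 1) = w n • lp.single 2 0 1 + lam n • lp.single 2 (n + 1) 1)
    (hwn : ∀ n, w n ≠ 0) (hSc : S ∘L φ = ψ ∘L S) (hTc : T ∘L φ = ψ ∘L T) (m : ℕ) :
    ψ (lp.single 2 0 1) (m + 1) = 0 := by
  simpa [hwn m] using (sub_mul_phi_single_apply hS hT hSc hTc m m).symm

theorem phi_single_eq_smul (hS : ∀ n, S (lp.single 2 n 1) = lp.single 2 (n + 1) 1)
    (hT : ∀ n, T (lp.single 2 n 1) = w n • lp.single 2 0 1 + lam n • lp.single 2 (n + 1) 1)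
    (hdist : ∀ i j : ℕ, i ≠ j → lam i ≠ lam j) (hwn : ∀ n, w n ≠ 0)
    (hSc : S ∘L φ = ψ ∘L S) (hTc : T ∘L φ = ψ ∘L T) (n : ℕ) :
    φ (lp.single 2 n 1) = φ (lp.single 2 n 1) n • lp.single 2 n 1 := by
  refine lp.eq_smul_single_of_apply_ne fun m hmn => ?_
  have h := sub_mul_phi_single_apply hS hT hSc hTc n m
  rw [psi_single_zero_apply_succ hS hT hwn hSc hTc, mul_zero] at h
  exact (mul_eq_zero.mp h).resolve_left (sub_ne_zero.mpr (hdist m n hmn))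

theorem phi_single_apply_self (hS : ∀ n, S (lp.single 2 n 1) = lp.single 2 (n + 1) 1)
    (hT : ∀ n, T (lp.single 2 n 1) = w n • lp.single 2 0 1 + lam n • lp.single 2 (n + 1) 1)
    (hdist : ∀ i j : ℕ, i ≠ j → lam i ≠ lam j) (hwn : ∀ n, w n ≠ 0)
    (hSc : S ∘L φ = ψ ∘L S) (hTc : T ∘L φ = ψ ∘L T) (n : ℕ) :
    φ (lp.single 2 n 1) n = ψ (lp.single 2 0 1) 0 := by
  have h := congr($(T_apply_phi_single hS hT hSc hTc n) 0)
  rw [phi_single_eq_smul hS hT hdist hwn hSc hTc n, map_smul, hT] at h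
  simp only [lp.coeFn_add, lp.coeFn_smul, Pi.add_apply, Pi.smul_apply, smul_eq_mul,
    shift_apply_zero hS] at h
  simp only [lp.single_apply_self, lp.single_apply_ne 2 _ _ (Nat.succ_ne_zero _).symm] at h
  exact mul_left_cancel₀ (hwn n) (by linear_combination h)

end KroneckerShift

theorem stmt_11_general
    (S : lp (fun _ : ℕ => ℂ) 2 →L[ℂ] lp (fun _ : ℕ => ℂ) 2)
    (hS : ∀ n : ℕ, S (lp.single 2 n (1 : ℂ)) = lp.single 2 (n + 1) (1 : ℂ))
    (lam : ℕ → ℂ)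
    (hdist : ∀ i j : ℕ, i ≠ j → lam i ≠ lam j)
    (w : ℕ → ℂ) (hwn : ∀ n, w n ≠ 0)
    (T : lp (fun _ : ℕ => ℂ) 2 →L[ℂ] lp (fun _ : ℕ => ℂ) 2)
    (hT : ∀ n : ℕ, T (lp.single 2 n (1 : ℂ)) =
      w n • lp.single 2 0 (1 : ℂ) + lam n • lp.single 2 (n + 1) (1 : ℂ)) :
    ∀ φ ψ : lp (fun _ : ℕ => ℂ) 2 →L[ℂ] lp (fun _ : ℕ => ℂ) 2,
      S ∘L φ = ψ ∘L S → T ∘L φ = ψ ∘L T →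
      ∃ a : ℂ, φ = a • (1 : lp (fun _ : ℕ => ℂ) 2 →L[ℂ] lp (fun _ : ℕ => ℂ) 2) ∧
        ψ = a • (1 : lp (fun _ : ℕ => ℂ) 2 →L[ℂ] lp (fun _ : ℕ => ℂ) 2) := by
  open KroneckerShift in
  intro φ ψ hSc hTc
  set a := ψ (lp.single 2 0 1) 0
  have hφ : ∀ n, φ (lp.single 2 n 1) = a • lp.single 2 n 1 := fun n => by
    rw [phi_single_eq_smul hS hT hdist hwn hSc hTc n,
      phi_single_apply_self hS hT hdist hwn hSc hTc]
  have hψ : ∀ n, ψ (lp.single 2 n 1) = a • lp.single 2 n 1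
    | 0 => lp.eq_smul_single_of_apply_ne fun
        | 0, h => absurd rfl h
        | m + 1, _ => psi_single_zero_apply_succ hS hT hwn hSc hTc m
    | n + 1 => by rw [psi_single_succ hS hSc, hφ, map_smul, hS]
  exact ⟨a, lp.ext_single_one ENNReal.ofNat_ne_top fun n => by simpa using hφ n,
    lp.ext_single_one ENNReal.ofNat_ne_top fun n => by simpa using hψ n⟩

/-- **A rank-one perturbation of a weighted shift gives a transitive Kronecker
representation.**
On `ℓ²(ℕ)` with canonical basis `(e_n)` (here `e n = lp.single 2 n 1`, `n = 0,1,2,…`,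
playing the role of `e_{n+1}`), let `S` be the unilateral shift (`S e_n = e_{n+1}`).
Let `λ = (λ_n)` be a bounded sequence with pairwise distinct entries and `w = (w_n)` a
square-summable sequence with all `w_n ≠ 0`.  Let `T = S D_λ + θ_{e₁, w̄}` be the bounded
operator determined by `T e_n = w_n e₁ + λ_n e_{n+1}`.  Then the Kronecker representation
`(f_α, f_β) = (S, T)` is transitive: if `S φ = ψ S` and `T φ = ψ T` for bounded operators
`φ, ψ`, then `φ = ψ = α I` for some scalar `α ∈ ℂ`. -/
theorem stmt_11
    (S : lp (fun _ : ℕ => ℂ) 2 →L[ℂ] lp (fun _ : ℕ => ℂ) 2)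
    (hS : ∀ n : ℕ, S (lp.single 2 n (1 : ℂ)) = lp.single 2 (n + 1) (1 : ℂ))
    (lam : ℕ → ℂ) (hbdd : ∃ C : ℝ, ∀ n, ‖lam n‖ ≤ C)
    (hdist : ∀ i j : ℕ, i ≠ j → lam i ≠ lam j)
    (w : ℕ → ℂ) (hw : Memℓp w 2) (hwn : ∀ n, w n ≠ 0)
    (T : lp (fun _ : ℕ => ℂ) 2 →L[ℂ] lp (fun _ : ℕ => ℂ) 2)
    (hT : ∀ n : ℕ, T (lp.single 2 n (1 : ℂ)) =
      w n • lp.single 2 0 (1 : ℂ) + lam n • lp.single 2 (n + 1) (1 : ℂ)) :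
    ∀ φ ψ : lp (fun _ : ℕ => ℂ) 2 →L[ℂ] lp (fun _ : ℕ => ℂ) 2,
      S ∘L φ = ψ ∘L S → T ∘L φ = ψ ∘L T →
      ∃ a : ℂ, φ = a • (1 : lp (fun _ : ℕ => ℂ) 2 →L[ℂ] lp (fun _ : ℕ => ℂ) 2) ∧
        ψ = a • (1 : lp (fun _ : ℕ => ℂ) 2 →L[ℂ] lp (fun _ : ℕ => ℂ) 2) :=
  stmt_11_general S hS lam hdist w hwn T hT
end

section
/- Fix a real constant λ > 1. On ℓ²(ℤ) with canonical orthonormal basis (e_n)_{n∈ℤ}, define weight sequences a(n) = exp(−λⁿ) if n ≥ 1 is even and a(n) = 1 otherwise, and b(n) = exp(−λⁿ) if n ≥ 1 is odd and b(n) = 1 otherwise. Let D_a and D_b be the diagonal operators with these weights, let U be the bilateral forward shift (U e_n = e_{n+1}), and set A = D_a and B = U D_b. Then the Kronecker representation (H^λ, f^λ) with f^λ_α = A and f^λ_β = B on H₁ = H₂ = ℓ²(ℤ) is transitive: whenever T₁ and T₂ are bounded operators on ℓ²(ℤ) with T₂ A = A T₁ and T₂ B = B T₁, there is a scalar α ∈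 ℂ with T₁ = T₂ = α I. -/
/-!
Write `t₁ m n` and `t₂ m n` for the matrix entries of `T₁` and `T₂`. Comparing entries in
`T₂ A = A T₁` and `T₂ B = B T₁` gives `a n t₂ m n = a m t₁ m n` and
`b n t₂ (m+1) (n+1) = b m t₁ m n`. Eliminating `t₁` shows that `exp (φ m - φ n) ‖t₂ m n‖` is
constant along diagonals, for any potential `φ` with `‖a‖ / ‖b‖ = exp (φ (· + 1) - φ)`.
For these weights `φ t = (-l) ^ t / (l + 1)` (for `t ≥ 1`), so `φ (n+k) - φ (m+k)` is unbounded
above when `m ≠ n`, and the bound `‖t₂ (m+k) (n+k)‖ ≤ ‖T₂‖` forces `t₂ m n = 0`. On the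
diagonal the same relations give `t₁ n n = t₂ n n = t₂ (n+1) (n+1)`.
-/

open scoped ENNReal
open Real

section MatrixEntries

variable {ι 𝕜 : Type*} [DecidableEq ι] [NontriviallyNormedField 𝕜] {p : ℝ≥0∞} [Fact (1 ≤ p)]

theorem lp.hasSum_mul_apply_single (hp : p ≠ ⊤)
    (T : lp (fun _ : ι => 𝕜) p →L[𝕜] lp (fun _ : ι => 𝕜) p) (x : lp (fun _ : ι => 𝕜) p)
    (m : ι) : HasSum (fun i => x i * T (lp.single p i 1) m) (T x m) := by
  have hsingle (i : ι) :
      lp.single (E := fun _ : ι => 𝕜) p i (x i) = x i • lp.single p i 1 := by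
    rw [← lp.single_smul, smul_eq_mul, mul_one]
  have := ((lp.evalCLM 𝕜 _ p m).comp T).hasSum (lp.hasSum_single hp x)
  simp only [ContinuousLinearMap.comp_apply, hsingle, map_smul, smul_eq_mul] at this
  exact this

theorem lp.apply_eq_mul_of_apply_single_eq_smul (hp : p ≠ ⊤)
    {T : lp (fun _ : ι => 𝕜) p →L[𝕜] lp (fun _ : ι => 𝕜) p} {w : ι → 𝕜}
    (hT : ∀ i, T (lp.single p i 1) = w i • lp.single p i 1) (x : lp (fun _ : ι => 𝕜) p)
    (m : ι) : T x m = w m * x m := by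
  refine (lp.hasSum_mul_apply_single hp T x m).unique ?_
  convert hasSum_single m fun i (hi : i ≠ m) => ?_ using 1
  · simp [hT, mul_comm]
  · simp [hT, Pi.single_eq_of_ne hi.symm]

theorem lp.eq_smul_one_of_apply_single_apply (hp : p ≠ ⊤)
    {T : lp (fun _ : ι => 𝕜) p →L[𝕜] lp (fun _ : ι => 𝕜) p} {c : 𝕜}
    (hdiag : ∀ n, T (lp.single p n 1) n = c)
    (hoff : ∀ m n, m ≠ n → T (lp.single p n 1) m = 0) : T = c • 1 := by
  refine lp.ext_continuousLinearMap hp fun n => ContinuousLinearMap.ext_ring <| lp.ext ?_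
  funext m
  rcases eq_or_ne m n with rfl | hmn
  · simp [hdiag]
  · simp [hoff m n hmn, Pi.single_eq_of_ne hmn]

theorem lp.norm_apply_single_apply_le (T : lp (fun _ : ι => 𝕜) p →L[𝕜] lp (fun _ : ι => 𝕜) p)
    (n m : ι) : ‖T (lp.single p n 1) m‖ ≤ ‖T‖ := by
  have hp : 0 < p := zero_lt_one.trans_le Fact.out
  calc ‖T (lp.single p n 1) m‖ ≤ ‖T (lp.single p n 1)‖ := lp.norm_apply_le_norm hp.ne' _ m
    _ ≤ ‖T‖ * ‖lp.single (E := fun _ : ι => 𝕜) p n 1‖ := T.le_opNorm _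
    _ = ‖T‖ := by rw [lp.norm_single hp, norm_one, mul_one]

theorem lp.apply_add_one_eq_mul_of_apply_single_eq_smul (hp : p ≠ ⊤)
    {T : lp (fun _ : ℤ => 𝕜) p →L[𝕜] lp (fun _ : ℤ => 𝕜) p} {w : ℤ → 𝕜}
    (hT : ∀ i, T (lp.single p i 1) = w i • lp.single p (i + 1) 1) (x : lp (fun _ : ℤ => 𝕜) p)
    (m : ℤ) : T x (m + 1) = w m * x m := by
  refine (lp.hasSum_mul_apply_single hp T x (m + 1)).unique ?_
  convert hasSum_single m fun i (hi : i ≠ m) => ?_ using 1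
  · simp [hT, mul_comm]
  · simp [hT, Pi.single_eq_of_ne (by omega : m + 1 ≠ i + 1)]

end MatrixEntries

theorem Int.apply_eq_apply_zero_of_apply_add_one {α : Type*} {f : ℤ → α}
    (h : ∀ k, f (k + 1) = f k) (k : ℤ) : f k = f 0 := by
  simpa using Function.Periodic.int_mul_eq (c := (1 : ℤ)) h k

theorem eq_zero_of_forall_exp_mul_le {ψ : ℕ → ℝ} (hψ : ¬BddAbove (Set.range ψ)) {x C : ℝ}
    (hx : 0 ≤ x) (h : ∀ k, exp (ψ k) * x ≤ C) : x = 0 := by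
  refine (hx.lt_or_eq.resolve_left fun hx₀ => hψ ⟨log (C / x), ?_⟩).symm
  rintro _ ⟨k, rfl⟩
  have hle : exp (ψ k) ≤ C / x := (le_div_iff₀ hx₀).2 (h k)
  exact (le_log_iff_exp_le ((exp_pos _).trans_le hle)).2 hle

section Intertwining

variable {𝕜 : Type*} [NontriviallyNormedField 𝕜] {p : ℝ≥0∞} [Fact (1 ≤ p)]
  {A B T₁ T₂ : lp (fun _ : ℤ => 𝕜) p →L[𝕜] lp (fun _ : ℤ => 𝕜) p} {a b : ℤ → 𝕜}

theorem mul_apply_single_eq_of_comp_diagonal (hp : p ≠ ⊤)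
    (hA : ∀ n, A (lp.single p n 1) = a n • lp.single p n 1) (h : T₂ ∘L A = A ∘L T₁)
    (m n : ℤ) : a n * T₂ (lp.single p n 1) m = a m * T₁ (lp.single p n 1) m := by
  have := congrArg (fun x : lp (fun _ : ℤ => 𝕜) p => x m) (DFunLike.congr_fun h (lp.single p n 1))
  simpa [hA, lp.apply_eq_mul_of_apply_single_eq_smul hp hA] using this

theorem mul_apply_single_add_one_eq_of_comp_shift (hp : p ≠ ⊤)
    (hB : ∀ n, B (lp.single p n 1) = b n • lp.single p (n + 1) 1) (h : T₂ ∘L B = B ∘L T₁)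
    (m n : ℤ) : b n * T₂ (lp.single p (n + 1) 1) (m + 1) = b m * T₁ (lp.single p n 1) m := by
  have := congrArg (fun x : lp (fun _ : ℤ => 𝕜) p => x (m + 1))
    (DFunLike.congr_fun h (lp.single p n 1))
  simpa [hB, lp.apply_add_one_eq_mul_of_apply_single_eq_smul hp hB] using this

variable {φ : ℤ → ℝ}

theorem exp_mul_norm_apply_single_add_one (hp : p ≠ ⊤) (hb : ∀ i, b i ≠ 0)
    (hab : ∀ i, ‖a i‖ = exp (φ (i + 1) - φ i) * ‖b i‖)
    (hA : ∀ n, A (lp.single p n 1) = a n • lp.single p n 1)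
    (hB : ∀ n, B (lp.single p n 1) = b n • lp.single p (n + 1) 1)
    (h₁ : T₂ ∘L A = A ∘L T₁) (h₂ : T₂ ∘L B = B ∘L T₁) (m n : ℤ) :
    exp (φ (m + 1) - φ (n + 1)) * ‖T₂ (lp.single p (n + 1) 1) (m + 1)‖ =
      exp (φ m - φ n) * ‖T₂ (lp.single p n 1) m‖ := by
  have key : a m * b n * T₂ (lp.single p (n + 1) 1) (m + 1) =
      a n * b m * T₂ (lp.single p n 1) m := by
    linear_combination a m * mul_apply_single_add_one_eq_of_comp_shift hp hB h₂ m n -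
      b m * mul_apply_single_eq_of_comp_diagonal hp hA h₁ m n
  replace key := congrArg norm key
  simp only [norm_mul, hab, exp_sub] at key ⊢
  have hbm := norm_pos_iff.2 (hb m)
  have hbn := norm_pos_iff.2 (hb n)
  have := exp_pos (φ m)
  have := exp_pos (φ n)
  field_simp at key ⊢
  linear_combination key

theorem exp_mul_norm_apply_single_add (hp : p ≠ ⊤) (hb : ∀ i, b i ≠ 0)
    (hab : ∀ i, ‖a i‖ = exp (φ (i + 1) - φ i) * ‖b i‖)
    (hA : ∀ n, A (lp.single p n 1) = a n • lp.single p n 1)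
    (hB : ∀ n, B (lp.single p n 1) = b n • lp.single p (n + 1) 1)
    (h₁ : T₂ ∘L A = A ∘L T₁) (h₂ : T₂ ∘L B = B ∘L T₁) (m n k : ℤ) :
    exp (φ (m + k) - φ (n + k)) * ‖T₂ (lp.single p (n + k) 1) (m + k)‖ =
      exp (φ m - φ n) * ‖T₂ (lp.single p n 1) m‖ := by
  simpa using Int.apply_eq_apply_zero_of_apply_add_one
    (f := fun k => exp (φ (m + k) - φ (n + k)) * ‖T₂ (lp.single p (n + k) 1) (m + k)‖)
    (fun k => by
      simpa only [add_assoc] using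
        exp_mul_norm_apply_single_add_one hp hb hab hA hB h₁ h₂ (m + k) (n + k)) k

theorem apply_single_apply_eq_zero_of_ne (hp : p ≠ ⊤) (hb : ∀ i, b i ≠ 0)
    (hab : ∀ i, ‖a i‖ = exp (φ (i + 1) - φ i) * ‖b i‖)
    (hφ : ∀ m n, m ≠ n → ¬BddAbove (Set.range fun k : ℕ => φ (n + k) - φ (m + k)))
    (hA : ∀ n, A (lp.single p n 1) = a n • lp.single p n 1)
    (hB : ∀ n, B (lp.single p n 1) = b n • lp.single p (n + 1) 1)
    (h₁ : T₂ ∘L A = A ∘L T₁) (h₂ : T₂ ∘L B = B ∘L T₁) {m n : ℤ} (hmn : m ≠ n) :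
    T₂ (lp.single p n 1) m = 0 := by
  have hzero := eq_zero_of_forall_exp_mul_le (hφ m n hmn)
    (x := exp (φ m - φ n) * ‖T₂ (lp.single p n 1) m‖) (by positivity) fun k => by
    calc exp (φ (n + k) - φ (m + k)) * (exp (φ m - φ n) * ‖T₂ (lp.single p n 1) m‖)
        = ‖T₂ (lp.single p (n + k) 1) (m + k)‖ := by
          rw [← exp_mul_norm_apply_single_add hp hb hab hA hB h₁ h₂ m n k, ← mul_assoc, ← exp_add]
          simp
      _ ≤ ‖T₂‖ := lp.norm_apply_single_apply_le T₂ _ _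
  simpa [(exp_pos _).ne'] using hzero

theorem exists_eq_smul_one_of_intertwining (hp : p ≠ ⊤) (hb : ∀ i, b i ≠ 0)
    (hab : ∀ i, ‖a i‖ = exp (φ (i + 1) - φ i) * ‖b i‖)
    (hφ : ∀ m n, m ≠ n → ¬BddAbove (Set.range fun k : ℕ => φ (n + k) - φ (m + k)))
    (hA : ∀ n, A (lp.single p n 1) = a n • lp.single p n 1)
    (hB : ∀ n, B (lp.single p n 1) = b n • lp.single p (n + 1) 1)
    (h₁ : T₂ ∘L A = A ∘L T₁) (h₂ : T₂ ∘L B = B ∘L T₁) :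
    ∃ c : 𝕜, T₁ = c • 1 ∧ T₂ = c • 1 := by
  have ha (i : ℤ) : a i ≠ 0 := by
    rw [← norm_pos_iff, hab]
    exact mul_pos (exp_pos _) (norm_pos_iff.2 (hb i))
  have hdiag := mul_apply_single_eq_of_comp_diagonal hp hA h₁
  have hshift := mul_apply_single_add_one_eq_of_comp_shift hp hB h₂
  have hoff₂ {m n : ℤ} (hmn : m ≠ n) : T₂ (lp.single p n 1) m = 0 :=
    apply_single_apply_eq_zero_of_ne hp hb hab hφ hA hB h₁ h₂ hmn
  have hdiag₁₂ (n : ℤ) : T₁ (lp.single p n 1) n = T₂ (lp.single p n 1) n :=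
    (mul_left_cancel₀ (ha n) (hdiag n n)).symm
  have hdiag₂ (n : ℤ) : T₂ (lp.single p n 1) n = T₂ (lp.single p 0 1) 0 :=
    Int.apply_eq_apply_zero_of_apply_add_one (f := fun n => T₂ (lp.single p n 1) n)
      (fun n => mul_left_cancel₀ (hb n) ((hshift n n).trans (by rw [hdiag₁₂]))) n
  refine ⟨T₂ (lp.single p 0 1) 0, lp.eq_smul_one_of_apply_single_apply hp
      (fun n => (hdiag₁₂ n).trans (hdiag₂ n)) fun m n hmn => ?_,
    lp.eq_smul_one_of_apply_single_apply hp hdiag₂ fun m n hmn => hoff₂ hmn⟩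
  simpa [hoff₂ hmn, ha m] using hdiag m n

end Intertwining

theorem norm_ite_ofReal_exp (P : Prop) [Decidable P] (x : ℝ) :
    ‖(if P then (exp x : ℂ) else 1)‖ = exp (if P then x else 0) := by
  split_ifs
  · rw [Complex.norm_real, norm_of_nonneg (exp_pos x).le]
  · rw [norm_one, exp_zero]

-- The increment at `t` is `-(-l) ^ t` for `t ≥ 1` and `0` for `t ≤ 0`, the exponent of `a t / b t`.
noncomputable def weightPotential (l : ℝ) (t : ℤ) : ℝ := (-l) ^ (max t 1).toNat / (l + 1)

section WeightPotential

variable {l : ℝ}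

theorem weightPotential_natCast {N : ℕ} (hN : 1 ≤ N) :
    weightPotential l N = (-l) ^ N / (l + 1) := by
  rw [weightPotential, show (max (N : ℤ) 1).toNat = N by omega]

theorem norm_even_weight_eq_exp_mul_norm_odd_weight (hl : l ≠ -1) (t : ℤ) :
    ‖(if 1 ≤ t ∧ Even t then (exp (-(l ^ t.toNat)) : ℂ) else 1)‖ =
      exp (weightPotential l (t + 1) - weightPotential l t) *
        ‖(if 1 ≤ t ∧ Odd t then (exp (-(l ^ t.toNat)) : ℂ) else 1)‖ := by
  rw [norm_ite_ofReal_exp, norm_ite_ofReal_exp, ← exp_add]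
  congr 1
  rcases lt_or_ge t 1 with ht | ht
  · have h₀ : ∀ s : ℤ, s ≤ 1 → (max s 1).toNat = 1 := by omega
    simp [weightPotential, h₀ _ ht.le, h₀ (t + 1) (by omega), ht.not_ge]
  obtain ⟨N, rfl⟩ : ∃ N : ℕ, t = N := ⟨t.toNat, by omega⟩
  have hpot : weightPotential l (N + 1) - weightPotential l N = -(-l) ^ N := by
    have hl₁ : l + 1 ≠ 0 := fun h => hl (by linarith)
    rw [← Nat.cast_succ, weightPotential_natCast (by omega),
      weightPotential_natCast (by exact_mod_cast ht), pow_succ]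
    field_simp
    ring
  rcases Nat.even_or_odd N with he | ho
  · simp [ht, he, hpot, he.neg_pow, Int.not_odd_iff_even.2 (Int.even_coe_nat N |>.2 he)]
  · simp [ht, ho, hpot, ho.neg_pow, Int.not_even_iff_odd.2 (Int.odd_coe_nat N |>.2 ho)]

theorem abs_weightPotential_le (hl : 1 ≤ l) {s : ℤ} {N : ℕ} (hs : s ≤ N) (hN : 1 ≤ N) :
    |weightPotential l s| ≤ l ^ N / (l + 1) := by
  rw [weightPotential, abs_div, abs_pow, abs_neg, abs_of_pos (by linarith : 0 < l + 1),
    abs_of_pos (by linarith : 0 < l)]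
  gcongr
  omega

theorem eventually_le_pow_succ_div_sub (hl : 1 < l) (R : ℝ) :
    ∀ᶠ N : ℕ in Filter.atTop, R ≤ l ^ (N + 1) / (l + 1) - l ^ N / (l + 1) := by
  have hc : 0 < (l - 1) / (l + 1) := div_pos (by linarith) (by linarith)
  have hgrowth := (tendsto_pow_atTop_atTop_of_one_lt hl).atTop_mul_const hc
  filter_upwards [hgrowth.eventually_ge_atTop R] with N hN
  exact hN.trans_eq (by ring)

theorem not_bddAbove_weightPotential_sub (hl : 1 < l) {m n : ℤ} (hmn : m ≠ n) :
    ¬BddAbove (Set.range fun k : ℕ => weightPotential l (n + k) - weightPotential l (m + k)) := by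
  rw [not_bddAbove_iff]
  intro R
  obtain ⟨N₀, hN₀⟩ := Filter.eventually_atTop.1 (eventually_le_pow_succ_div_sub hl (R + 1))
  -- The larger of the two indices is moved to `N + 1`, of the parity making `±(-l) ^ (N + 1)`
  -- positive; the other one stays `≤ N`, where `|weightPotential| ≤ l ^ N / (l + 1)`.
  rcases hmn.lt_or_gt with hlt | hgt
  · set N := 2 * (N₀ + m.natAbs + n.natAbs) + 1
    refine ⟨_, ⟨((N + 1 : ℕ) - n : ℤ).toNat, rfl⟩, ?_⟩
    have hn : n + (((N + 1 : ℕ) - n : ℤ).toNat : ℤ) = (N + 1 : ℕ) := by omega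
    have hm := (le_abs_self _).trans <| abs_weightPotential_le hl.le
      (s := m + (((N + 1 : ℕ) - n : ℤ).toNat : ℤ)) (N := N) (by omega) (by omega)
    have he : Even (N + 1) := ⟨N₀ + m.natAbs + n.natAbs + 1, by omega⟩
    simp only [hn, weightPotential_natCast (by omega : 1 ≤ N + 1), he.neg_pow]
    linarith [hN₀ N (by omega)]
  · set N := 2 * (N₀ + m.natAbs + n.natAbs + 1)
    refine ⟨_, ⟨((N + 1 : ℕ) - m : ℤ).toNat, rfl⟩, ?_⟩
    have hm : m + (((N + 1 : ℕ) - m : ℤ).toNat : ℤ) = (N + 1 : ℕ) := by omega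
    have hn := neg_abs_le _ |>.trans' <| neg_le_neg <| abs_weightPotential_le hl.le
      (s := n + (((N + 1 : ℕ) - m : ℤ).toNat : ℤ)) (N := N) (by omega) (by omega)
    have ho : Odd (N + 1) := ⟨N₀ + m.natAbs + n.natAbs + 1, by omega⟩
    simp only [hm, weightPotential_natCast (by omega : 1 ≤ N + 1), ho.neg_pow, neg_div]
    linarith [hN₀ N (by omega)]

end WeightPotential

/-- **A transitive Kronecker representation from Harrison–Radjavi–Rosenthal weights.**
Fix `λ > 1`.  On `ℓ²(ℤ)` with canonical basis `(e_n)_{n ∈ ℤ}` (`e n = lp.single 2 n 1`),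
let `A = D_a` be the diagonal operator with weights `a(n) = exp(-λⁿ)` for even `n ≥ 1`
and `a(n) = 1` otherwise, and let `B = U D_b` be the weighted bilateral forward shift
with weights `b(n) = exp(-λⁿ)` for odd `n ≥ 1` and `b(n) = 1` otherwise.  Then the
Kronecker representation `(f_α, f_β) = (A, B)` is transitive: if `T₂ A = A T₁` and
`T₂ B = B T₁` for bounded operators `T₁, T₂`, then `T₁ = T₂ = α I` for some `α ∈ ℂ`. -/
theorem stmt_12 (l : ℝ) (hl : 1 < l)
    (A B : lp (fun _ : ℤ => ℂ) 2 →L[ℂ] lp (fun _ : ℤ => ℂ) 2)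
    (hA : ∀ n : ℤ, A (lp.single 2 n (1 : ℂ)) =
      (if 1 ≤ n ∧ Even n then (Real.exp (-(l ^ n.toNat)) : ℂ) else 1) •
        lp.single 2 n (1 : ℂ))
    (hB : ∀ n : ℤ, B (lp.single 2 n (1 : ℂ)) =
      (if 1 ≤ n ∧ Odd n then (Real.exp (-(l ^ n.toNat)) : ℂ) else 1) •
        lp.single 2 (n + 1) (1 : ℂ)) :
    ∀ T₁ T₂ : lp (fun _ : ℤ => ℂ) 2 →L[ℂ] lp (fun _ : ℤ => ℂ) 2,
      T₂ ∘L A = A ∘L T₁ → T₂ ∘L B = B ∘L T₁ →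
      ∃ a : ℂ, T₁ = a • (1 : lp (fun _ : ℤ => ℂ) 2 →L[ℂ] lp (fun _ : ℤ => ℂ) 2) ∧
        T₂ = a • (1 : lp (fun _ : ℤ => ℂ) 2 →L[ℂ] lp (fun _ : ℤ => ℂ) 2) := by
  intro T₁ T₂ h₁ h₂
  have hb (i : ℤ) : (if 1 ≤ i ∧ Odd i then (exp (-(l ^ i.toNat)) : ℂ) else 1) ≠ 0 := by
    split_ifs
    · exact Complex.ofReal_ne_zero.2 (exp_pos _).ne'
    · exact one_ne_zero
  exact exists_eq_smul_one_of_intertwining ENNReal.ofNat_ne_top hb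
    (norm_even_weight_eq_exp_mul_norm_odd_weight (by linarith))
    (fun _ _ => not_bddAbove_weightPotential_sub hl) hA hB h₁ h₂
end

section
/- Fix a real constant λ > 1 and let A = D_a and B = U D_b be the operators on ℓ²(ℤ) with weights a(n) = exp(−λⁿ) for n ≥ 1 even, a(n) = 1 otherwise, and b(n) = exp(−λⁿ) for n ≥ 1 odd, b(n) = 1 otherwise. Let S be the unilateral shift on ℓ²(ℕ), let μ = (μ_n)_{n≥1} be any bounded complex sequence with pairwise distinct entries, let w = (w_n)_{n≥1} be any square-summable sequence with all w_n ≠ 0, and let T = S D_μ + θ_{e₁, w̄}. Then the Kronecker representation (f_α, f_β) = (A, B) on ℓ²(ℤ) is not isomorphic to the Kronecker representation (f_α, f_β) = (S, T) on ℓ²(ℕ): there exist no invertible bounded operators φ₁, φ₂ : ℓ²(ℕ) → ℓ²(ℤ) with φ₂ S = A φ₁ and φ₂ T = B φ₁. (Indeed, the range of S is closed while the range of A is not closed.) -/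
/-!
The shift `S` is an isometry, so it is bounded below (antilipschitz). An isomorphism of
representations gives `A = φ₂ S φ₁⁻¹`, which would then be bounded below too. But `A` has the
eigenvalues `exp (-λⁿ)`, `n` even, which tend to `0`.
-/

open scoped ENNReal NNReal
open Filter Topology

section MapSingle

variable {𝕜 ι κ : Type*} [NormedField 𝕜] [DecidableEq ι] [DecidableEq κ] {p : ℝ≥0∞} [Fact (1 ≤ p)]

theorem lp.apply_map_of_map_single_eq_single (hp : p ≠ ∞) {σ : ι → κ} (hσ : σ.Injective)
    {S : lp (fun _ : ι => 𝕜) p →L[𝕜] lp (fun _ : κ => 𝕜) p}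
    (hS : ∀ i, S (lp.single p i 1) = lp.single p (σ i) 1) (y : lp (fun _ : ι => 𝕜) p) (i : ι) :
    S y (σ i) = y i := by
  have : (lp.evalCLM 𝕜 (fun _ : κ => 𝕜) p (σ i)).comp S = lp.evalCLM 𝕜 (fun _ : ι => 𝕜) p i := by
    refine lp.ext_continuousLinearMap hp fun j => ?_
    ext
    simp [lp.evalCLM, hS, Pi.single_apply, hσ.eq_iff]
  exact congr($this y)

theorem lp.norm_le_norm_map_of_map_single_eq_single (hp : p ≠ ∞) {σ : ι → κ} (hσ : σ.Injective)
    {S : lp (fun _ : ι => 𝕜) p →L[𝕜] lp (fun _ : κ => 𝕜) p}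
    (hS : ∀ i, S (lp.single p i 1) = lp.single p (σ i) 1) (y : lp (fun _ : ι => 𝕜) p) :
    ‖y‖ ≤ ‖S y‖ := by
  have hp' : 0 < p.toReal := ENNReal.toReal_pos (zero_lt_one.trans_le Fact.out).ne' hp
  refine lp.norm_le_of_forall_sum_le hp' (norm_nonneg _) fun s => ?_
  calc ∑ i ∈ s, ‖y i‖ ^ p.toReal
      = ∑ k ∈ s.map ⟨σ, hσ⟩, ‖S y k‖ ^ p.toReal := by
        simp [lp.apply_map_of_map_single_eq_single hp hσ hS]
    _ ≤ ‖S y‖ ^ p.toReal := lp.sum_rpow_le_norm_rpow hp' _ _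

end MapSingle

section

variable {𝕜 E₁ E₂ F₁ F₂ : Type*} [NontriviallyNormedField 𝕜]
  [NormedAddCommGroup E₁] [NormedSpace 𝕜 E₁] [NormedAddCommGroup E₂] [NormedSpace 𝕜 E₂]
  [NormedAddCommGroup F₁] [NormedSpace 𝕜 F₁] [NormedAddCommGroup F₂] [NormedSpace 𝕜 F₂]

theorem AntilipschitzWith.exists_of_intertwines {S : E₁ →L[𝕜] E₂} {A : F₁ →L[𝕜] F₂}
    (φ₁ : E₁ ≃L[𝕜] F₁) (φ₂ : E₂ ≃L[𝕜] F₂) (h : ∀ x, φ₂ (S x) = A (φ₁ x)) {K : ℝ≥0}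
    (hS : AntilipschitzWith K S) : ∃ K', AntilipschitzWith K' A := by
  have hA : (A : F₁ → F₂) = φ₂ ∘ S ∘ φ₁.symm := by
    ext z
    simp [h]
  rw [hA]
  exact ⟨_, φ₂.antilipschitz.comp (hS.comp φ₁.symm.antilipschitz)⟩

theorem AntilipschitzWith.one_le_mul_norm_of_apply_eq_smul {A : E₁ →L[𝕜] E₁} {K : ℝ≥0}
    (hA : AntilipschitzWith K A) {c : 𝕜} {x : E₁} (hx : x ≠ 0) (hc : A x = c • x) :
    1 ≤ K * ‖c‖ := by
  have := A.bound_of_antilipschitz hA x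
  rw [hc, norm_smul, ← mul_assoc] at this
  exact one_le_of_le_mul_right₀ (norm_pos_iff.mpr hx) this
end

theorem stmt_13_general (l : ℝ) (hl : 1 < l)
    (A B : lp (fun _ : ℤ => ℂ) 2 →L[ℂ] lp (fun _ : ℤ => ℂ) 2)
    (hA : ∀ n : ℤ, A (lp.single 2 n (1 : ℂ)) =
      (if 1 ≤ n ∧ Even n then (Real.exp (-(l ^ n.toNat)) : ℂ) else 1) •
        lp.single 2 n (1 : ℂ))
    (S : lp (fun _ : ℕ => ℂ) 2 →L[ℂ] lp (fun _ : ℕ => ℂ) 2)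
    (hS : ∀ n : ℕ, S (lp.single 2 n (1 : ℂ)) = lp.single 2 (n + 1) (1 : ℂ))
    (T : lp (fun _ : ℕ => ℂ) 2 →L[ℂ] lp (fun _ : ℕ => ℂ) 2) :
    ¬ ∃ φ₁ φ₂ : lp (fun _ : ℕ => ℂ) 2 ≃L[ℂ] lp (fun _ : ℤ => ℂ) 2,
      (∀ x, φ₂ (S x) = A (φ₁ x)) ∧ (∀ x, φ₂ (T x) = B (φ₁ x)) := by
  rintro ⟨φ₁, φ₂, hSA, -⟩
  have hS_bdd : AntilipschitzWith 1 S :=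
    S.antilipschitz_of_bound fun y => by
      simpa using lp.norm_le_norm_map_of_map_single_eq_single (by simp) Nat.succ_injective hS y
  obtain ⟨K, hK⟩ := hS_bdd.exists_of_intertwines φ₁ φ₂ hSA
  have heigen (m : ℕ) : 1 ≤ K * Real.exp (-(l ^ (2 * m + 2))) := by
    have hn : 1 ≤ ((2 * m + 2 : ℕ) : ℤ) ∧ Even ((2 * m + 2 : ℕ) : ℤ) :=
      ⟨by omega, ⟨m + 1, by push_cast; ring⟩⟩
    have hne : (lp.single 2 ((2 * m + 2 : ℕ) : ℤ) (1 : ℂ) : lp (fun _ : ℤ => ℂ) 2) ≠ 0 := by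
      rw [← norm_pos_iff, lp.norm_single (by norm_num)]
      exact norm_pos_iff.mpr one_ne_zero
    have := hK.one_le_mul_norm_of_apply_eq_smul hne (hA _)
    rwa [if_pos hn, Int.toNat_natCast, Complex.norm_real, Real.norm_of_nonneg (Real.exp_nonneg _)]
      at this
  have hsmall : Tendsto (fun m : ℕ => (K : ℝ) * Real.exp (-(l ^ (2 * m + 2)))) atTop (𝓝 0) := by
    have hpow := (tendsto_pow_atTop_atTop_of_one_lt hl).comp
      (tendsto_atTop_atTop.2 fun b => ⟨b, fun m hm => by omega⟩ :
        Tendsto (fun m : ℕ => 2 * m + 2) atTop atTop)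
    simpa using (Real.tendsto_exp_neg_atTop_nhds_zero.comp hpow).const_mul (K : ℝ)
  obtain ⟨m, hm⟩ := (hsmall.eventually (gt_mem_nhds one_pos)).exists
  exact absurd (heigen m) (not_le.mpr hm)

/-- **The Harrison–Radjavi–Rosenthal type representation `(A, B)` on `ℓ²(ℤ)` is not
isomorphic to any rank-one perturbation representation `(S, T)` on `ℓ²(ℕ)`.**
Here `λ > 1`, `A = D_a`, `B = U D_b` are as in the HRR construction; `S` is the
unilateral shift and `T = S D_μ + θ_{e₁, w̄}` is determined by
`T e_n = w_n e₁ + μ_n e_{n+1}`, where `μ` is bounded with pairwise distinct entries and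
`w` is square-summable with all entries non-zero.  There are no invertible bounded
operators `φ₁, φ₂ : ℓ²(ℕ) → ℓ²(ℤ)` with `φ₂ S = A φ₁` and `φ₂ T = B φ₁`. -/
theorem stmt_13 (l : ℝ) (hl : 1 < l)
    (A B : lp (fun _ : ℤ => ℂ) 2 →L[ℂ] lp (fun _ : ℤ => ℂ) 2)
    (hA : ∀ n : ℤ, A (lp.single 2 n (1 : ℂ)) =
      (if 1 ≤ n ∧ Even n then (Real.exp (-(l ^ n.toNat)) : ℂ) else 1) •
        lp.single 2 n (1 : ℂ))
    (hB : ∀ n : ℤ, B (lp.single 2 n (1 : ℂ)) =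
      (if 1 ≤ n ∧ Odd n then (Real.exp (-(l ^ n.toNat)) : ℂ) else 1) •
        lp.single 2 (n + 1) (1 : ℂ))
    (S : lp (fun _ : ℕ => ℂ) 2 →L[ℂ] lp (fun _ : ℕ => ℂ) 2)
    (hS : ∀ n : ℕ, S (lp.single 2 n (1 : ℂ)) = lp.single 2 (n + 1) (1 : ℂ))
    (mu : ℕ → ℂ) (hbdd : ∃ C : ℝ, ∀ n, ‖mu n‖ ≤ C)
    (hdist : ∀ i j : ℕ, i ≠ j → mu i ≠ mu j)
    (w : ℕ → ℂ) (hw : Memℓp w 2) (hwn : ∀ n, w n ≠ 0)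
    (T : lp (fun _ : ℕ => ℂ) 2 →L[ℂ] lp (fun _ : ℕ => ℂ) 2)
    (hT : ∀ n : ℕ, T (lp.single 2 n (1 : ℂ)) =
      w n • lp.single 2 0 (1 : ℂ) + mu n • lp.single 2 (n + 1) (1 : ℂ)) :
    ¬ ∃ φ₁ φ₂ : lp (fun _ : ℕ => ℂ) 2 ≃L[ℂ] lp (fun _ : ℤ => ℂ) 2,
      (∀ x, φ₂ (S x) = A (φ₁ x)) ∧ (∀ x, φ₂ (T x) = B (φ₁ x)) :=
  stmt_13_general l hl A B hA S hS T
end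

section
/- Let A be a bounded operator on a complex Hilbert space K, and in H = K ⊕ K consider the four closed subspaces E₁ = K ⊕ 0, E₂ = 0 ⊕ K, E₃ = {(x, Ax) : x ∈ K} and E₄ = {(y, y) : y ∈ K}. Then a bounded operator φ on H satisfies φ(E_i) ⊆ E_i for i = 1,2,3,4 if and only if φ = T ⊕ T for some bounded operator T on K with TA = AT; that is, End(𝓢_A) = { T ⊕ T : T ∈ B(K), AT = TA } is isomorphic to the commutant {A}′. -/
/-! Invariance of `K ⊕ 0` and `0 ⊕ K` forces `φ` to be diagonal, `φ = S ⊕ T`. Testing on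
`(y, y)` shows that invariance of the diagonal means `S = T`, and testing on `(x, A x)` then
shows that invariance of the graph of `A` means `T A = A T`. The argument is pure linear
algebra. -/

variable {K : Type*} [NormedAddCommGroup K] [InnerProductSpace ℂ K] [CompleteSpace K]

/-- `E₁ = K ⊕ 0` inside the Hilbert space direct sum `H = K ⊕ K`. -/
noncomputable def subE1 (K : Type*) [NormedAddCommGroup K] [InnerProductSpace ℂ K] :
    Submodule ℂ (WithLp 2 (K × K)) :=
  Submodule.comap (WithLp.linearEquiv 2 ℂ (K × K)).toLinearMap
    ((⊤ : Submodule ℂ K).prod (⊥ : Submodule ℂ K))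

/-- `E₂ = 0 ⊕ K` inside `H = K ⊕ K`. -/
noncomputable def subE2 (K : Type*) [NormedAddCommGroup K] [InnerProductSpace ℂ K] :
    Submodule ℂ (WithLp 2 (K × K)) :=
  Submodule.comap (WithLp.linearEquiv 2 ℂ (K × K)).toLinearMap
    ((⊥ : Submodule ℂ K).prod (⊤ : Submodule ℂ K))

/-- `E₃ = {(x, Ax) : x ∈ K}`, the graph of `A`, inside `H = K ⊕ K`. -/
noncomputable def subE3 {K : Type*} [NormedAddCommGroup K] [InnerProductSpace ℂ K]
    (A : K →L[ℂ] K) : Submodule ℂ (WithLp 2 (K × K)) :=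
  Submodule.comap (WithLp.linearEquiv 2 ℂ (K × K)).toLinearMap
    (LinearMap.graph (A : K →ₗ[ℂ] K))

/-- `E₄ = {(y, y) : y ∈ K}`, the diagonal, inside `H = K ⊕ K`. -/
noncomputable def subE4 (K : Type*) [NormedAddCommGroup K] [InnerProductSpace ℂ K] :
    Submodule ℂ (WithLp 2 (K × K)) :=
  Submodule.comap (WithLp.linearEquiv 2 ℂ (K × K)).toLinearMap
    (LinearMap.graph (LinearMap.id : K →ₗ[ℂ] K))

theorem LinearEquiv.forall_mem_comap_iff_conj {R M N : Type*} [Semiring R] [AddCommMonoid M]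
    [AddCommMonoid N] [Module R M] [Module R N] (e : N ≃ₗ[R] M) (p : Submodule R M)
    (f : N → N) :
    (∀ x ∈ p.comap e.toLinearMap, f x ∈ p.comap e.toLinearMap) ↔
      ∀ y ∈ p, e (f (e.symm y)) ∈ p := by
  simp only [Submodule.mem_comap, e.symm.surjective.forall, LinearEquiv.coe_coe,
    LinearEquiv.apply_symm_apply]

namespace ContinuousLinearMap

variable {R M : Type*} [Semiring R] [AddCommMonoid M] [Module R M] [TopologicalSpace M]

theorem eq_prodMap_of_invariant_prod {φ : M × M →L[R] M × M}
    (h₁ : ∀ x ∈ (⊤ : Submodule R M).prod ⊥, φ x ∈ (⊤ : Submodule R M).prod ⊥)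
    (h₂ : ∀ x ∈ (⊥ : Submodule R M).prod ⊤, φ x ∈ (⊥ : Submodule R M).prod ⊤) :
    φ = (fst R M M ∘L φ ∘L inl R M M).prodMap (snd R M M ∘L φ ∘L inr R M M) := by
  refine ContinuousLinearMap.ext fun ⟨x, y⟩ => ?_
  have hx : (φ (x, 0)).2 = 0 := (Submodule.mem_prod.1 (h₁ (x, 0) (by simp))).2
  have hy : (φ (0, y)).1 = 0 := (Submodule.mem_prod.1 (h₂ (0, y) (by simp))).1
  have hxy : φ (x, y) = φ (x, 0) + φ (0, y) := by
    rw [← map_add, Prod.mk_add_mk, add_zero, zero_add]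
  rw [hxy]
  ext <;> simp [hx, hy]

theorem prodMap_invariant_diagonal_iff (S T : M →L[R] M) :
    (∀ x ∈ LinearMap.graph (LinearMap.id : M →ₗ[R] M),
      S.prodMap T x ∈ LinearMap.graph (LinearMap.id : M →ₗ[R] M)) ↔ S = T := by
  simp only [LinearMap.mem_graph_iff, LinearMap.id_apply]
  refine ⟨fun h ↦ ext fun y ↦ (h (y, y) rfl).symm, ?_⟩
  rintro rfl ⟨x, y⟩ (rfl : y = x)
  rfl

theorem prodMap_invariant_graph_iff (A T : M →L[R] M) :
    (∀ x ∈ LinearMap.graph (A : M →ₗ[R] M),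
      T.prodMap T x ∈ LinearMap.graph (A : M →ₗ[R] M)) ↔ T ∘L A = A ∘L T := by
  simp only [LinearMap.mem_graph_iff, coe_coe]
  refine ⟨fun h ↦ ext fun x ↦ h (x, A x) rfl, ?_⟩
  rintro h ⟨x, y⟩ (rfl : y = A x)
  exact congr($h x)

theorem fourSubspaces_invariant_iff_exists_commute_prodMap (A : M →L[R] M)
    (φ : M × M →L[R] M × M) :
    ((∀ x ∈ (⊤ : Submodule R M).prod ⊥, φ x ∈ (⊤ : Submodule R M).prod ⊥) ∧
     (∀ x ∈ (⊥ : Submodule R M).prod ⊤, φ x ∈ (⊥ : Submodule R M).prod ⊤) ∧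
     (∀ x ∈ LinearMap.graph (A : M →ₗ[R] M),
       φ x ∈ LinearMap.graph (A : M →ₗ[R] M)) ∧
     (∀ x ∈ LinearMap.graph (LinearMap.id : M →ₗ[R] M),
       φ x ∈ LinearMap.graph (LinearMap.id : M →ₗ[R] M)))
    ↔ ∃ T : M →L[R] M, T ∘L A = A ∘L T ∧ φ = T.prodMap T := by
  constructor
  · rintro ⟨h₁, h₂, h₃, h₄⟩
    have hφ := eq_prodMap_of_invariant_prod h₁ h₂
    set T := fst R M M ∘L φ ∘L inl R M M
    have hST : T = snd R M M ∘L φ ∘L inr R M M :=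
      (prodMap_invariant_diagonal_iff _ _).1 (hφ ▸ h₄)
    rw [← hST] at hφ
    exact ⟨T, (prodMap_invariant_graph_iff A T).1 (hφ ▸ h₃), hφ⟩
  · rintro ⟨T, hT, rfl⟩
    refine ⟨?_, ?_, (prodMap_invariant_graph_iff A T).2 hT,
      (prodMap_invariant_diagonal_iff T T).2 rfl⟩
    · simp [Submodule.mem_prod]
    · simp [Submodule.mem_prod]

end ContinuousLinearMap

/-- **The endomorphism algebra of the system of four subspaces `𝓢_A` is the commutant of
`A`.**  A bounded operator `φ` on `H = K ⊕ K` leaves each of `E₁`, `E₂`, `E₃ = graph A`,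
`E₄ = diagonal` invariant iff `φ = T ⊕ T` for some bounded operator `T` commuting
with `A`. -/
theorem stmt_15 (A : K →L[ℂ] K)
    (φ : WithLp 2 (K × K) →L[ℂ] WithLp 2 (K × K)) :
    ((∀ x ∈ subE1 K, φ x ∈ subE1 K) ∧
     (∀ x ∈ subE2 K, φ x ∈ subE2 K) ∧
     (∀ x ∈ subE3 A, φ x ∈ subE3 A) ∧
     (∀ x ∈ subE4 K, φ x ∈ subE4 K))
    ↔
    (∃ T : K →L[ℂ] K, T ∘L A = A ∘L T ∧
      ∀ p : WithLp 2 (K × K),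
        WithLp.equiv 2 (K × K) (φ p) =
          (T (WithLp.equiv 2 (K × K) p).1, T (WithLp.equiv 2 (K × K) p).2)) := by
  set e := WithLp.prodContinuousLinearEquiv 2 ℂ K K
  set ψ : K × K →L[ℂ] K × K := e ∘L φ ∘L e.symm
  have transport (p : Submodule ℂ (K × K)) :
      (∀ x ∈ p.comap (WithLp.linearEquiv 2 ℂ (K × K)).toLinearMap,
        φ x ∈ p.comap (WithLp.linearEquiv 2 ℂ (K × K)).toLinearMap) ↔
        ∀ y ∈ p, ψ y ∈ p :=
    LinearEquiv.forall_mem_comap_iff_conj _ p φ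
  rw [subE1, subE2, subE3, subE4, transport, transport, transport, transport,
    ContinuousLinearMap.fourSubspaces_invariant_iff_exists_commute_prodMap]
  refine exists_congr fun T ↦ and_congr_right fun _ ↦ ?_
  rw [ContinuousLinearMap.ext_iff]
  exact (WithLp.equiv 2 (K × K)).forall_congr_right.symm
end

section
/- Let A and B be bounded operators on a complex Hilbert space K, with associated systems of four subspaces 𝓢_A = (K ⊕ K; E₁, E₂, E₃(A), E₄) and 𝓢_B = (K ⊕ K; E₁, E₂, E₃(B), E₄), where E₁ = K ⊕ 0, E₂ = 0 ⊕ K, E₃(A) = {(x, Ax) : x ∈ K}, E₃(B) = {(x, Bx) : x ∈ K} and E₄ = {(y, y) : y ∈ K}. Then 𝓢_A and 𝓢_B are isomorphic — i.e., there exists an invertible bounded operator φ on K ⊕ K with φ(E₁) = E₁, φ(E₂) = E₂, φ(E₃(A)) = E₃(B) and φ(E₄) = E₄ — if and only if A and B are similar, i.e., there exists an invertible bounded operator W on K with WA = BW. -/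
variable {K : Type*} [NormedAddCommGroup K] [InnerProductSpace ℂ K] [CompleteSpace K]

/-!
An isomorphism `φ` of `K ⊕ K` fixing `E₁ = K ⊕ 0` and `E₂ = 0 ⊕ K` is block diagonal,
`φ = diag(X, Y)`; since it also fixes the diagonal `E₄`, `X = Y =: W`. Such a `φ` maps the graph of
`A` onto the graph of `W A W⁻¹`, so it carries `E₃(A)` to `E₃(B)` exactly when `W A = B W`.
Conversely, for invertible `W` the operator `diag(W, W)` is an isomorphism `𝓢_A ≅ 𝓢_B`.
-/

@[ext]
lemma WithLp.prod_ext {p : ENNReal} {α β : Type*} {x y : WithLp p (α × β)}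
    (h₁ : x.fst = y.fst) (h₂ : x.snd = y.snd) : x = y :=
  (WithLp.ext_iff p).2 (Prod.ext h₁ h₂)

theorem ContinuousLinearMap.isUnit_iff_exists_equiv {R M : Type*} [Semiring R]
    [TopologicalSpace M] [AddCommMonoid M] [Module R M] {f : M →L[R] M} :
    IsUnit f ↔ ∃ e : M ≃L[R] M, (e : M →L[R] M) = f := by
  constructor
  · rintro ⟨u, rfl⟩
    exact ⟨ContinuousLinearEquiv.unitsEquiv R M u, rfl⟩
  · rintro ⟨e, rfl⟩
    exact ⟨(ContinuousLinearEquiv.unitsEquiv R M).symm e, rfl⟩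

section

variable {E : Type*} [NormedAddCommGroup E] [InnerProductSpace ℂ E]

@[simp]
lemma mem_subE1_iff {z : WithLp 2 (E × E)} : z ∈ subE1 E ↔ z.snd = 0 := by
  simp [subE1]

@[simp]
lemma mem_subE2_iff {z : WithLp 2 (E × E)} : z ∈ subE2 E ↔ z.fst = 0 := by
  simp [subE2]

@[simp]
lemma mem_subE3_iff {A : E →L[ℂ] E} {z : WithLp 2 (E × E)} : z ∈ subE3 A ↔ z.snd = A z.fst := by
  simp [subE3, LinearMap.mem_graph_iff]

@[simp]
lemma mem_subE4_iff {z : WithLp 2 (E × E)} : z ∈ subE4 E ↔ z.snd = z.fst := by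
  simp [subE4, LinearMap.mem_graph_iff]

lemma subE3_injective :
    Function.Injective (subE3 : (E →L[ℂ] E) → Submodule ℂ (WithLp 2 (E × E))) := by
  intro A B h
  ext x
  have hx : WithLp.toLp 2 (x, A x) ∈ subE3 B := h ▸ mem_subE3_iff.2 rfl
  exact mem_subE3_iff.1 hx

noncomputable def blockDiagEquiv (e : E ≃L[ℂ] E) : WithLp 2 (E × E) ≃L[ℂ] WithLp 2 (E × E) :=
  (WithLp.prodContinuousLinearEquiv 2 ℂ E E).trans
    ((e.prodCongr e).trans (WithLp.prodContinuousLinearEquiv 2 ℂ E E).symm)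

@[simp]
lemma blockDiagEquiv_symm_apply (e : E ≃L[ℂ] E) (z : WithLp 2 (E × E)) :
    (blockDiagEquiv e).symm z = WithLp.toLp 2 (e.symm z.fst, e.symm z.snd) := rfl

lemma map_blockDiagEquiv_subE1 (e : E ≃L[ℂ] E) :
    (subE1 E).map ((blockDiagEquiv e : WithLp 2 (E × E) →L[ℂ] WithLp 2 (E × E)) :
      WithLp 2 (E × E) →ₗ[ℂ] WithLp 2 (E × E)) = subE1 E := by
  ext z
  simp

lemma map_blockDiagEquiv_subE2 (e : E ≃L[ℂ] E) :
    (subE2 E).map ((blockDiagEquiv e : WithLp 2 (E × E) →L[ℂ] WithLp 2 (E × E)) :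
      WithLp 2 (E × E) →ₗ[ℂ] WithLp 2 (E × E)) = subE2 E := by
  ext z
  simp

lemma map_blockDiagEquiv_subE4 (e : E ≃L[ℂ] E) :
    (subE4 E).map ((blockDiagEquiv e : WithLp 2 (E × E) →L[ℂ] WithLp 2 (E × E)) :
      WithLp 2 (E × E) →ₗ[ℂ] WithLp 2 (E × E)) = subE4 E := by
  ext z
  simp

lemma map_blockDiagEquiv_subE3 (e : E ≃L[ℂ] E) (A : E →L[ℂ] E) :
    (subE3 A).map ((blockDiagEquiv e : WithLp 2 (E × E) →L[ℂ] WithLp 2 (E × E)) :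
      WithLp 2 (E × E) →ₗ[ℂ] WithLp 2 (E × E)) =
      subE3 ((e : E →L[ℂ] E) ∘L A ∘L (e.symm : E →L[ℂ] E)) := by
  ext z
  simp [e.symm_apply_eq]

lemma map_blockDiagEquiv_subE3_eq_iff (e : E ≃L[ℂ] E) (A B : E →L[ℂ] E) :
    (subE3 A).map ((blockDiagEquiv e : WithLp 2 (E × E) →L[ℂ] WithLp 2 (E × E)) :
      WithLp 2 (E × E) →ₗ[ℂ] WithLp 2 (E × E)) = subE3 B ↔
      (e : E →L[ℂ] E) ∘L A = B ∘L e := by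
  rw [map_blockDiagEquiv_subE3, subE3_injective.eq_iff]
  constructor
  · rintro rfl
    ext x
    simp
  · intro h
    ext y
    simpa using congr($h (e.symm y))

noncomputable def toBlock₁₁ (φ : WithLp 2 (E × E) →L[ℂ] WithLp 2 (E × E)) : E →L[ℂ] E :=
  WithLp.fstL 2 ℂ E E ∘L φ ∘L
    ((WithLp.prodContinuousLinearEquiv 2 ℂ E E).symm : E × E →L[ℂ] WithLp 2 (E × E)) ∘L
      ContinuousLinearMap.inl ℂ E E

lemma toBlock₁₁_apply (φ : WithLp 2 (E × E) →L[ℂ] WithLp 2 (E × E)) (x : E) :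
    toBlock₁₁ φ x = (φ (WithLp.toLp 2 (x, 0))).fst := rfl

lemma apply_eq_toLp_toBlock₁₁ {φ : WithLp 2 (E × E) →L[ℂ] WithLp 2 (E × E)}
    (h₁ : (subE1 E).map (φ : WithLp 2 (E × E) →ₗ[ℂ] WithLp 2 (E × E)) ≤ subE1 E)
    (h₂ : (subE2 E).map (φ : WithLp 2 (E × E) →ₗ[ℂ] WithLp 2 (E × E)) ≤ subE2 E)
    (h₄ : (subE4 E).map (φ : WithLp 2 (E × E) →ₗ[ℂ] WithLp 2 (E × E)) ≤ subE4 E)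
    (z : WithLp 2 (E × E)) : φ z = WithLp.toLp 2 (toBlock₁₁ φ z.fst, toBlock₁₁ φ z.snd) := by
  have hφ : ∀ {S T : Submodule ℂ (WithLp 2 (E × E))},
      S.map (φ : WithLp 2 (E × E) →ₗ[ℂ] WithLp 2 (E × E)) ≤ T → ∀ z ∈ S, φ z ∈ T :=
    fun h z hz => h (Submodule.mem_map_of_mem hz)
  have hfst : ∀ x : E, (φ (WithLp.toLp 2 (x, 0))).snd = 0 := fun x =>
    mem_subE1_iff.1 (hφ h₁ _ (mem_subE1_iff.2 rfl))
  have hsnd : ∀ y : E, (φ (WithLp.toLp 2 (0, y))).fst = 0 := fun y =>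
    mem_subE2_iff.1 (hφ h₂ _ (mem_subE2_iff.2 rfl))
  -- `φ (y, y) = φ (y, 0) + φ (0, y)` lies on the diagonal
  have hdiag : ∀ y : E, (φ (WithLp.toLp 2 (0, y))).snd = toBlock₁₁ φ y := fun y => by
    have hy := mem_subE4_iff.1 (hφ h₄ (WithLp.toLp 2 (y, y)) (mem_subE4_iff.2 rfl))
    have hsplit : WithLp.toLp 2 (y, y) = WithLp.toLp 2 (y, 0) + WithLp.toLp 2 ((0 : E), y) := by
      simp [← WithLp.toLp_add]
    rw [hsplit, map_add] at hy
    simpa [hfst, hsnd, toBlock₁₁_apply] using hy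
  have hsplit : z = WithLp.toLp 2 (z.fst, 0) + WithLp.toLp 2 (0, z.snd) := by
    ext <;> simp
  rw [hsplit, map_add]
  ext <;> simp [hfst, hsnd, hdiag, toBlock₁₁_apply]

lemma exists_eq_blockDiagEquiv {φ : WithLp 2 (E × E) ≃L[ℂ] WithLp 2 (E × E)}
    (h₁ : (subE1 E).map ((φ : WithLp 2 (E × E) →L[ℂ] WithLp 2 (E × E)) :
      WithLp 2 (E × E) →ₗ[ℂ] WithLp 2 (E × E)) = subE1 E)
    (h₂ : (subE2 E).map ((φ : WithLp 2 (E × E) →L[ℂ] WithLp 2 (E × E)) :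
      WithLp 2 (E × E) →ₗ[ℂ] WithLp 2 (E × E)) = subE2 E)
    (h₄ : (subE4 E).map ((φ : WithLp 2 (E × E) →L[ℂ] WithLp 2 (E × E)) :
      WithLp 2 (E × E) →ₗ[ℂ] WithLp 2 (E × E)) = subE4 E) :
    ∃ e : E ≃L[ℂ] E, φ = blockDiagEquiv e := by
  have hsymm : ∀ {S : Submodule ℂ (WithLp 2 (E × E))},
      S.map ((φ : WithLp 2 (E × E) →L[ℂ] WithLp 2 (E × E)) :
        WithLp 2 (E × E) →ₗ[ℂ] WithLp 2 (E × E)) = S →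
      S.map ((φ.symm : WithLp 2 (E × E) →L[ℂ] WithLp 2 (E × E)) :
        WithLp 2 (E × E) →ₗ[ℂ] WithLp 2 (E × E)) = S :=
    fun h => (Submodule.map_symm_eq_iff φ.toLinearEquiv).2 h
  have hφ : ∀ z, φ z = _ := apply_eq_toLp_toBlock₁₁ h₁.le h₂.le h₄.le
  have hψ : ∀ z, φ.symm z = _ :=
    apply_eq_toLp_toBlock₁₁ (hsymm h₁).le (hsymm h₂).le (hsymm h₄).le
  have hleft : ∀ x, toBlock₁₁ (φ.symm : WithLp 2 (E × E) →L[ℂ] WithLp 2 (E × E))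
      (toBlock₁₁ φ x) = x := fun x => by
    have h := congr(($(φ.symm_apply_apply (WithLp.toLp 2 (x, 0)))).fst)
    rw [hφ, hψ] at h
    simpa using h
  have hright : ∀ x, toBlock₁₁ (φ : WithLp 2 (E × E) →L[ℂ] WithLp 2 (E × E))
      (toBlock₁₁ φ.symm x) = x := fun x => by
    have h := congr(($(φ.apply_symm_apply (WithLp.toLp 2 (x, 0)))).fst)
    rw [hψ, hφ] at h
    simpa using h
  exact ⟨.equivOfInverse _ _ hleft hright, ContinuousLinearEquiv.ext (funext hφ)⟩

end

/-- **The systems of four subspaces `𝓢_A` and `𝓢_B` are isomorphic iff `A` and `B` are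
similar.**  There is an invertible bounded operator `φ` on `H = K ⊕ K` with
`φ(E₁) = E₁`, `φ(E₂) = E₂`, `φ(E₃(A)) = E₃(B)`, `φ(E₄) = E₄` iff there is an invertible
bounded operator `W` on `K` with `W A = B W`. -/
theorem stmt_16 (A B : K →L[ℂ] K) :
    (∃ φ : WithLp 2 (K × K) ≃L[ℂ] WithLp 2 (K × K),
      Submodule.map ((φ : WithLp 2 (K × K) →L[ℂ] WithLp 2 (K × K)) : WithLp 2 (K × K) →ₗ[ℂ] WithLp 2 (K × K)) (subE1 K) = subE1 K ∧
      Submodule.map ((φ : WithLp 2 (K × K) →L[ℂ] WithLp 2 (K × K)) : WithLp 2 (K × K) →ₗ[ℂ] WithLp 2 (K × K)) (subE2 K) = subE2 K ∧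
      Submodule.map ((φ : WithLp 2 (K × K) →L[ℂ] WithLp 2 (K × K)) : WithLp 2 (K × K) →ₗ[ℂ] WithLp 2 (K × K)) (subE3 A) = subE3 B ∧
      Submodule.map ((φ : WithLp 2 (K × K) →L[ℂ] WithLp 2 (K × K)) : WithLp 2 (K × K) →ₗ[ℂ] WithLp 2 (K × K)) (subE4 K) = subE4 K)
    ↔
    (∃ W : K →L[ℂ] K, IsUnit W ∧ W ∘L A = B ∘L W) := by
  constructor
  · rintro ⟨φ, h₁, h₂, h₃, h₄⟩
    obtain ⟨e, rfl⟩ := exists_eq_blockDiagEquiv h₁ h₂ h₄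
    exact ⟨e, ContinuousLinearMap.isUnit_iff_exists_equiv.2 ⟨e, rfl⟩,
      (map_blockDiagEquiv_subE3_eq_iff e A B).1 h₃⟩
  · rintro ⟨W, hW, hWAB⟩
    obtain ⟨e, rfl⟩ := ContinuousLinearMap.isUnit_iff_exists_equiv.1 hW
    exact ⟨blockDiagEquiv e, map_blockDiagEquiv_subE1 e, map_blockDiagEquiv_subE2 e,
      (map_blockDiagEquiv_subE3_eq_iff e A B).2 hWAB, map_blockDiagEquiv_subE4 e⟩
end
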